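/- arXiv:2401.13029 — 8 statements merged into one kernel-verified Lean document; each statement's English description precedes it below -/
import Mathlib

section
/- With g(t) as above for a k-element subset of Z/m (m odd, k ≤ m), for every t one has g(t) + g(t + g(t)) ≤ k − 1 and g(t) + g(t + g(t) + 1) ≥ k − 1, where the argument of g is taken modulo k (cyclically through the members). -/
/-- With `g` the almost-semicircle counting function of a `k`-element subset of
`ZMod m` (`m` odd, `k ≤ m`) enumerated in cyclic order, for every `t` one has
`g t + g (t + g t) ≤ k - 1` and `g t + g (t + g t + 1) ≥ k - 1`, the argument of
`g` taken cyclically (mod `k`). -/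
theorem stmt_3 (m k : ℕ) [NeZero m] [NeZero k] (hm : Odd m) (hk : k ≤ m)
    (i : ZMod k → ZMod m) (hinj : Function.Injective i)
    (hnext : ∀ t : ZMod k, ∃ d ∈ Finset.Icc 1 m,
      i (t+1) = i t + (d : ZMod m) ∧
      ∀ e ∈ Finset.Ico 1 d, i t + (e : ZMod m) ∉ Set.range i)
    (g : ZMod k → ℕ)
    (hg : ∀ t, g t = (Finset.univ.filter (fun s : ZMod k =>
        i s ∈ (Finset.Icc 1 ((m-1)/2)).image (fun d : ℕ => i t + (d : ZMod m)))).card)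
    (t : ZMod k) :
    g t + g (t + (g t : ZMod k)) ≤ k - 1 ∧
    k - 1 ≤ g t + g (t + (g t : ZMod k) + 1) := by
  classical
  obtain ⟨r, hr⟩ := hm
  have hmr : (m - 1) / 2 = r := by omega
  have hm1 : 1 ≤ m := Nat.one_le_iff_ne_zero.mpr (NeZero.ne m)
  have hk1 : 1 ≤ k := Nat.one_le_iff_ne_zero.mpr (NeZero.ne k)
  have hrm : r < m := by omega
  set δ : ZMod k → ZMod k → ℕ := fun u s => (i s - i u).val with hδdef
  have hδlt : ∀ u s, δ u s < m := fun u s => ZMod.val_lt _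
  have hδspec : ∀ u s, i s = i u + (δ u s : ZMod m) := by
    intro u s
    simp only [hδdef]
    rw [ZMod.natCast_rightInverse]
    ring
  have hδof : ∀ (u s : ZMod k) (d : ℕ), d < m → i s = i u + (d : ZMod m) → δ u s = d := by
    intro u s d hd hi
    simp only [hδdef]
    rw [hi, add_sub_cancel_left, ZMod.val_cast_of_lt hd]
  have hδ0 : ∀ u s, δ u s = 0 ↔ s = u := by
    intro u s
    constructor
    · intro h0
      have h1 := hδspec u s
      rw [h0] at h1
      simp at h1
      exact hinj h1
    · intro h; subst h; simp [hδdef]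
  have hδself : ∀ u, δ u u = 0 := fun u => (hδ0 u u).mpr rfl
  -- characterization of g
  have hg' : ∀ u, g u = (Finset.univ.filter (fun s => 1 ≤ δ u s ∧ δ u s ≤ r)).card := by
    intro u
    rw [hg u]
    congr 1
    ext s
    simp only [Finset.mem_filter, Finset.mem_univ, true_and, Finset.mem_image,
      Finset.mem_Icc, hmr]
    constructor
    · rintro ⟨d, ⟨hd1, hd2⟩, hds⟩
      have hde : δ u s = d := hδof u s d (by omega) hds.symm
      omega
    · rintro ⟨h1, h2⟩
      exact ⟨δ u s, ⟨h1, h2⟩, (hδspec u s).symm⟩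
  -- step: delta increases along the enumeration
  have hstep : ∀ (t0 u : ZMod k), u + 1 ≠ t0 → δ t0 u < δ t0 (u + 1) := by
    intro t0 u hne
    obtain ⟨d, hd, hiu, hmin⟩ := hnext u
    simp only [Finset.mem_Icc] at hd
    have ha : i u = i t0 + ((δ t0 u : ℕ) : ZMod m) := hδspec t0 u
    have haltm : δ t0 u < m := hδlt t0 u
    rcases lt_trichotomy (δ t0 u + d) m with hlt | heq | hgt
    · have he : δ t0 (u+1) = δ t0 u + d := by
        apply hδof _ _ _ hlt
        rw [hiu, ha]
        push_cast
        ring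
      omega
    · exfalso
      apply hne
      apply hinj
      rw [hiu, ha, add_assoc, ← Nat.cast_add, heq]
      simp
    · exfalso
      have he : i u + ((m - δ t0 u : ℕ) : ZMod m) = i t0 := by
        rw [ha, add_assoc, ← Nat.cast_add]
        have h2 : δ t0 u + (m - δ t0 u) = m := by omega
        rw [h2]
        simp
      exact hmin (m - δ t0 u) (by simp only [Finset.mem_Ico]; omega) ⟨t0, he.symm⟩
  -- monotonicity
  have hmono : ∀ (t0 : ZMod k) (b : ℕ), b < k → ∀ a : ℕ, a < b →
      δ t0 (t0 + (a : ZMod k)) < δ t0 (t0 + (b : ZMod k)) := by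
    intro t0 b
    induction b with
    | zero => omega
    | succ c ih =>
      intro hbk a hab
      have hstep' : δ t0 (t0 + (c : ZMod k)) < δ t0 (t0 + ((c+1 : ℕ) : ZMod k)) := by
        have h1 : ((c+1 : ℕ) : ZMod k) = (c : ZMod k) + 1 := by push_cast; ring
        rw [h1, ← add_assoc]
        apply hstep
        rw [add_assoc, ← h1]
        intro hcon
        have h0 : ((c+1 : ℕ) : ZMod k) = 0 := by
          have := congrArg (fun x => x - t0) hcon
          simpa using this
        rw [ZMod.natCast_eq_zero_iff] at h0
        have := Nat.le_of_dvd (by omega) h0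
        omega
      rcases Nat.lt_or_ge a c with h | h
      · exact lt_trans (ih (by omega) a h) hstep'
      · have : a = c := by omega
        subst this
        exact hstep'
  have hcastinj : ∀ a b : ℕ, a < k → b < k → (a : ZMod k) = (b : ZMod k) → a = b := by
    intro a b ha hb hab
    have := congrArg ZMod.val hab
    rwa [ZMod.val_cast_of_lt ha, ZMod.val_cast_of_lt hb] at this
  have hdecomp : ∀ (t0 s : ZMod k), ∃ j, j < k ∧ s = t0 + (j : ZMod k) := by
    intro t0 s
    refine ⟨(s - t0).val, ZMod.val_lt _, ?_⟩
    rw [ZMod.natCast_rightInverse]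
    ring
  -- the initial-segment structure
  have hmain : ∀ t0 : ZMod k, g t0 < k ∧ δ t0 (t0 + ((g t0 : ℕ) : ZMod k)) ≤ r ∧
      ∀ j : ℕ, g t0 < j → j < k → r < δ t0 (t0 + (j : ZMod k)) := by
    intro t0
    set S := (Finset.range k).filter (fun j : ℕ => δ t0 (t0 + (j : ZMod k)) ≤ r) with hS
    have hTS : Finset.univ.filter (fun s => δ t0 s ≤ r)
        = S.image (fun j : ℕ => t0 + (j : ZMod k)) := by
      ext s
      simp only [Finset.mem_filter, Finset.mem_image, Finset.mem_univ, true_and, hS,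
        Finset.mem_range]
      constructor
      · intro hs
        obtain ⟨j, hj, rfl⟩ := hdecomp t0 s
        exact ⟨j, ⟨⟨hj, hs⟩, rfl⟩⟩
      · rintro ⟨j, ⟨hj, hjr⟩, rfl⟩
        exact hjr
    have hScard : S.card = g t0 + 1 := by
      have h1 : (S.image (fun j : ℕ => t0 + (j : ZMod k))).card = S.card := by
        apply Finset.card_image_of_injOn
        intro a ha b hb hab
        simp only [hS, Finset.coe_filter, Set.mem_setOf_eq, Finset.mem_range] at ha hb
        exact hcastinj a b ha.1 hb.1 (by simpa using congrArg (fun x => x - t0) hab)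
      have h2 : Finset.univ.filter (fun s => δ t0 s ≤ r)
          = insert t0 (Finset.univ.filter (fun s => 1 ≤ δ t0 s ∧ δ t0 s ≤ r)) := by
        ext s
        simp only [Finset.mem_filter, Finset.mem_insert, Finset.mem_univ, true_and]
        constructor
        · intro hs
          rcases Nat.eq_zero_or_pos (δ t0 s) with h0 | h0
          · exact Or.inl ((hδ0 t0 s).mp h0)
          · exact Or.inr ⟨h0, hs⟩
        · rintro (h | ⟨h1, h2⟩)
          · rw [h, hδself t0]
            omega
          · exact h2
      have h3 : t0 ∉ Finset.univ.filter (fun s => 1 ≤ δ t0 s ∧ δ t0 s ≤ r) := by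
        simp [hδself t0]
      calc S.card = (S.image (fun j : ℕ => t0 + (j : ZMod k))).card := h1.symm
        _ = (insert t0 (Finset.univ.filter (fun s => 1 ≤ δ t0 s ∧ δ t0 s ≤ r))).card := by
            rw [← hTS, h2]
        _ = (Finset.univ.filter (fun s => 1 ≤ δ t0 s ∧ δ t0 s ≤ r)).card + 1 :=
            Finset.card_insert_of_notMem h3
        _ = g t0 + 1 := by rw [← hg' t0]
    have hdc : ∀ j1 j2 : ℕ, j1 ≤ j2 → j2 ∈ S → j1 ∈ S := by
      intro j1 j2 hle hj2
      simp only [hS, Finset.mem_filter, Finset.mem_range] at hj2 ⊢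
      rcases eq_or_lt_of_le hle with rfl | hlt
      · exact hj2
      · exact ⟨by omega, le_of_lt (lt_of_lt_of_le (hmono t0 j2 hj2.1 j1 hlt) hj2.2)⟩
    have hSchar : ∀ j, j ∈ S ↔ j ≤ g t0 := by
      intro j
      constructor
      · intro hj
        by_contra hc
        push_neg at hc
        have hsub : Finset.range (j+1) ⊆ S := by
          intro x hx
          simp only [Finset.mem_range] at hx
          exact hdc x j (by omega) hj
        have := Finset.card_le_card hsub
        rw [Finset.card_range, hScard] at this
        omega
      · intro hj
        by_contra hc
        have hsub : S ⊆ Finset.range j := by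
          intro x hx
          simp only [Finset.mem_range]
          by_contra hx2
          exact hc (hdc j x (by omega) hx)
        have := Finset.card_le_card hsub
        rw [Finset.card_range, hScard] at this
        omega
    have hmem : g t0 ∈ S := (hSchar (g t0)).mpr le_rfl
    simp only [hS, Finset.mem_filter, Finset.mem_range] at hmem
    refine ⟨hmem.1, hmem.2, ?_⟩
    intro j hj1 hj2
    by_contra hc
    push_neg at hc
    have : j ∈ S := by
      simp only [hS, Finset.mem_filter, Finset.mem_range]
      exact ⟨hj2, hc⟩
    have := (hSchar j).mp this
    omega
  obtain ⟨hnk, hfn, hafter⟩ := hmain t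
  have hcardZ : Fintype.card (ZMod k) = k := ZMod.card k
  constructor
  · -- upper bound
    set t1 := t + ((g t : ℕ) : ZMod k) with ht1
    set A := Finset.univ.filter (fun s => 1 ≤ δ t s ∧ δ t s ≤ r) with hA
    set B := Finset.univ.filter (fun s => 1 ≤ δ t1 s ∧ δ t1 s ≤ r) with hB
    have hBd : ∀ s ∈ B, r < δ t s := by
      intro s hs
      simp only [hB, Finset.mem_filter, Finset.mem_univ, true_and] at hs
      obtain ⟨h1, h2⟩ := hs
      have hds : δ t s = δ t t1 + δ t1 s := by
        apply hδof
        · omega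
        · rw [hδspec t1 s, hδspec t t1]
          push_cast
          ring
      by_contra hcon
      push_neg at hcon
      obtain ⟨j, hjk, rfl⟩ := hdecomp t s
      have hjn : j ≤ g t := by
        by_contra hc2
        push_neg at hc2
        have := hafter j hc2 hjk
        omega
      have hle : δ t (t + (j : ZMod k)) ≤ δ t t1 := by
        rcases eq_or_lt_of_le hjn with rfl | hlt
        · exact le_rfl
        · exact le_of_lt (hmono t (g t) hnk j hlt)
      omega
    have hAB : Disjoint A B := by
      rw [Finset.disjoint_left]
      intro s hsA hsB
      have h1 := hBd s hsB
      simp only [hA, Finset.mem_filter, Finset.mem_univ, true_and] at hsA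
      omega
    have htA : t ∉ A := by simp [hA, hδself t]
    have htB : t ∉ B := by
      intro hc
      have := hBd t hc
      rw [hδself t] at this
      omega
    have hcard : (insert t (A ∪ B)).card ≤ k := by
      calc (insert t (A ∪ B)).card ≤ Finset.univ.card := Finset.card_le_card (Finset.subset_univ _)
        _ = k := by rw [Finset.card_univ, hcardZ]
    rw [Finset.card_insert_of_notMem (by simp [htA, htB]),
      Finset.card_union_of_disjoint hAB] at hcard
    have e1 : g t = A.card := by rw [hg' t]
    have e2 : g t1 = B.card := by rw [hg' t1]
    omega
  · -- lower bound
    rcases eq_or_lt_of_le (Nat.succ_le_of_lt hnk) with heq | hlt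
    · -- g t = k - 1
      have ht0 : t + ((g t : ℕ) : ZMod k) + 1 = t := by
        rw [add_assoc]
        have : ((g t : ℕ) : ZMod k) + 1 = ((g t + 1 : ℕ) : ZMod k) := by push_cast; ring
        have heq' : g t + 1 = k := heq
        rw [this, heq']
        simp
      rw [ht0]
      omega
    · -- g t + 1 < k
      have hc'r : r < δ t (t + ((g t + 1 : ℕ) : ZMod k)) := hafter (g t + 1) (by omega) hlt
      have hc'm : δ t (t + ((g t + 1 : ℕ) : ZMod k)) < m := hδlt _ _
      set t2 := t + ((g t : ℕ) : ZMod k) + 1 with ht2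
      have ht2' : t2 = t + ((g t + 1 : ℕ) : ZMod k) := by rw [ht2]; push_cast; ring
      set c' := δ t (t + ((g t + 1 : ℕ) : ZMod k)) with hc'
      have hit2 : i t2 = i t + (c' : ZMod m) := by rw [ht2']; exact hδspec t _
      set C := Finset.univ.filter (fun s => 1 ≤ δ t2 s ∧ δ t2 s ≤ r) with hC
      set W := (Finset.range (g t + 2)).image (fun j : ℕ => t + (j : ZMod k)) with hW
      have hWcard : W.card = g t + 2 := by
        rw [hW, Finset.card_image_of_injOn, Finset.card_range]
        intro a ha b hb hab
        simp only [Finset.coe_range, Set.mem_Iio] at ha hb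
        exact hcastinj a b (by omega) (by omega) (by simpa using congrArg (fun x => x - t) hab)
      have hsub : insert t (Finset.univ \ W) ⊆ C := by
        intro s hs
        rcases Finset.mem_insert.mp hs with rfl | hs
        · simp only [hC, Finset.mem_filter, Finset.mem_univ, true_and]
          have hd : δ t2 s = m - c' := by
            apply hδof
            · omega
            · rw [hit2, add_assoc, ← Nat.cast_add]
              have : c' + (m - c') = m := by omega
              rw [this]
              simp
          omega
        · simp only [Finset.mem_sdiff, Finset.mem_univ, true_and, hW, Finset.mem_image,
            Finset.mem_range, not_exists] at hs
          obtain ⟨j, hjk, rfl⟩ := hdecomp t s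
          have hj2 : g t + 2 ≤ j := by
            by_contra hc2
            push_neg at hc2
            exact (hs j) ⟨hc2, rfl⟩
          have hfj : c' < δ t (t + (j : ZMod k)) := hmono t j hjk (g t + 1) (by omega)
          have hfjm : δ t (t + (j : ZMod k)) < m := hδlt _ _
          have hd : δ t2 (t + (j : ZMod k)) = δ t (t + (j : ZMod k)) - c' := by
            apply hδof
            · omega
            · rw [hit2, add_assoc, ← Nat.cast_add]
              have : c' + (δ t (t + (j : ZMod k)) - c') = δ t (t + (j : ZMod k)) := by omega
              rw [this]
              exact hδspec t _
          simp only [hC, Finset.mem_filter, Finset.mem_univ, true_and]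
          omega
      have htW : t ∈ W := by
        simp only [hW, Finset.mem_image, Finset.mem_range]
        exact ⟨0, by omega, by simp⟩
      have hWuniv : W ⊆ Finset.univ := Finset.subset_univ _
      have hsd : (Finset.univ \ W).card = k - (g t + 2) := by
        rw [Finset.card_sdiff_of_subset hWuniv, hWcard, Finset.card_univ, hcardZ]
      have htnW : t ∉ Finset.univ \ W := by simp [htW]
      have hCcard : k - (g t + 2) + 1 ≤ C.card := by
        have := Finset.card_le_card hsub
        rw [Finset.card_insert_of_notMem htnW, hsd] at this
        omega
      have e2 : g t2 = C.card := by rw [hg' t2]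
      omega
end

section
/- With g(t) as above, 0 ≤ g(t) ≤ k−1 for all t; moreover if g achieves the value 0 or the value k−1 at some t, then the members of T are all contained in some set of (m+1)/2 consecutive residues, and then the multiset of values of g is exactly {k−1, k−2, ..., 1, 0}. -/
lemma aux_map (m k n : ℕ) [NeZero m] [NeZero k] (hmn : m = 2*n+1)
    (i : ZMod k → ZMod m) (hinj : Function.Injective i)
    (g : ZMod k → ℕ)
    (hg : ∀ t, g t = (Finset.univ.filter (fun s : ZMod k =>
        i s ∈ (Finset.Icc 1 n).image (fun d : ℕ => i t + (d : ZMod m)))).card)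
    (j : ZMod m) (hcont : ∀ s, ∃ d ≤ n, i s = j + (d : ZMod m)) :
    Finset.univ.val.map g = Multiset.range k := by
  set a : ZMod k → ℕ := fun s => (i s - j).val with ha_def
  have hain : ∀ s, i s = j + (a s : ZMod m) := by
    intro s
    rw [ha_def]
    simp only
    rw [ZMod.natCast_rightInverse (i s - j)]
    ring
  have hale : ∀ s, a s ≤ n := by
    intro s
    obtain ⟨d, hd, hds⟩ := hcont s
    have h1 : i s - j = (d : ZMod m) := by rw [hds]; ring
    have : a s = d := by rw [ha_def]; simp only; rw [h1, ZMod.val_cast_of_lt (by omega)]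
    omega
  have hainj : Function.Injective a := fun s s' h => hinj (by rw [hain s, hain s', h])
  have gval : ∀ s, g s = (Finset.univ.filter (fun s' => a s < a s')).card := by
    intro s
    rw [hg]
    congr 1
    apply Finset.filter_congr
    intro s' _
    simp only [Finset.mem_image, Finset.mem_Icc]
    constructor
    · rintro ⟨d, ⟨hd1, hd2⟩, hd⟩
      rw [hain s, hain s'] at hd
      have hc : ((a s + d : ℕ) : ZMod m) = ((a s' : ℕ) : ZMod m) := by
        push_cast
        linear_combination hd
      have h2 := hale s
      have h3 := hale s'
      have h1 : a s + d = a s' := by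
        have := congrArg ZMod.val hc
        rwa [ZMod.val_cast_of_lt (by omega), ZMod.val_cast_of_lt (by omega)] at this
      omega
    · intro hlt
      refine ⟨a s' - a s, ⟨by omega, by have := hale s'; omega⟩, ?_⟩
      rw [hain s, hain s']
      rw [Nat.cast_sub hlt.le]
      ring
  have hglt : ∀ s s', a s < a s' → g s' < g s := by
    intro s s' h
    rw [gval, gval]
    apply Finset.card_lt_card
    have hsub : Finset.univ.filter (fun x => a s' < a x) ⊆
        Finset.univ.filter (fun x => a s < a x) := by
      intro x hx
      rw [Finset.mem_filter] at hx ⊢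
      exact ⟨hx.1, lt_trans h hx.2⟩
    rw [Finset.ssubset_iff_of_subset hsub]
    exact ⟨s', Finset.mem_filter.mpr ⟨Finset.mem_univ _, h⟩,
      fun hx => lt_irrefl _ (Finset.mem_filter.mp hx).2⟩
  have hginj : Function.Injective g := by
    intro s s' h
    by_contra hne
    have hane : a s ≠ a s' := fun he => hne (hainj he)
    rcases lt_or_gt_of_ne hane with hl | hl
    · have := hglt _ _ hl; omega
    · have := hglt _ _ hl; omega
  have hglt_k : ∀ s, g s < k := by
    intro s
    rw [gval]
    have hsub : Finset.univ.filter (fun s' => a s < a s') ⊆ Finset.univ.erase s := by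
      intro x hx
      rw [Finset.mem_erase]
      refine ⟨fun he => ?_, Finset.mem_univ _⟩
      subst he
      exact lt_irrefl _ (Finset.mem_filter.mp hx).2
    have h1 := Finset.card_le_card hsub
    have h2 : (Finset.univ.erase s).card = k - 1 := by
      rw [Finset.card_erase_of_mem (Finset.mem_univ _), Finset.card_univ, ZMod.card]
    have hk1 : 1 ≤ k := Nat.one_le_iff_ne_zero.mpr (NeZero.ne k)
    omega
  have himg : Finset.image g Finset.univ = Finset.range k := by
    apply Finset.eq_of_subset_of_card_le
    · intro x hx
      rw [Finset.mem_image] at hx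
      obtain ⟨s, -, rfl⟩ := hx
      exact Finset.mem_range.mpr (hglt_k s)
    · rw [Finset.card_range, Finset.card_image_of_injective _ hginj,
        Finset.card_univ, ZMod.card]
  calc Finset.univ.val.map g = (Finset.univ.image g).val :=
        (Finset.image_val_of_injOn (hginj.injOn)).symm
    _ = Multiset.range k := by rw [himg, Finset.range_val]

/-- With `g` the almost-semicircle counting function of a `k`-element subset of
`ZMod m` (`m` odd, `k ≤ m`): `0 ≤ g t ≤ k-1` always; moreover if `g` achieves the
value `0` or the value `k-1` somewhere, then all members are contained in a set of
`(m+1)/2` consecutive residues, and the multiset of values of `g` is exactly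
`{k-1, k-2, ..., 1, 0}`. -/
theorem stmt_4 (m k : ℕ) [NeZero m] [NeZero k] (hm : Odd m) (hk : k ≤ m)
    (i : ZMod k → ZMod m) (hinj : Function.Injective i)
    (g : ZMod k → ℕ)
    (hg : ∀ t, g t = (Finset.univ.filter (fun s : ZMod k =>
        i s ∈ (Finset.Icc 1 ((m-1)/2)).image (fun d : ℕ => i t + (d : ZMod m)))).card) :
    (∀ t, g t ≤ k - 1) ∧
    ((∃ t, g t = 0 ∨ g t = k - 1) →
      (∃ j : ZMod m, ∀ s, i s ∈ (Finset.range ((m+1)/2)).image (fun d : ℕ => j + (d : ZMod m))) ∧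
      Finset.univ.val.map g = Multiset.range k) := by
  obtain ⟨n, hmn⟩ : ∃ n, m = 2*n+1 := by
    obtain ⟨r, hr⟩ := hm; exact ⟨r, by omega⟩
  have hm1 : (m-1)/2 = n := by omega
  have hm2 : (m+1)/2 = n+1 := by omega
  simp only [hm1] at hg
  have hk1 : 1 ≤ k := Nat.one_le_iff_ne_zero.mpr (NeZero.ne k)
  have hnotself : ∀ t, t ∉ Finset.univ.filter (fun s : ZMod k =>
      i s ∈ (Finset.Icc 1 n).image (fun d : ℕ => i t + (d : ZMod m))) := by
    intro t ht
    simp only [Finset.mem_filter, Finset.mem_image, Finset.mem_Icc] at ht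
    obtain ⟨-, d, ⟨hd1, hd2⟩, hd⟩ := ht
    have h0 : (d : ZMod m) = 0 := by linear_combination hd
    have := congrArg ZMod.val h0
    rw [ZMod.val_cast_of_lt (by omega), ZMod.val_zero] at this
    omega
  have herase : ∀ t : ZMod k, (Finset.univ.erase t).card = k - 1 := by
    intro t
    rw [Finset.card_erase_of_mem (Finset.mem_univ _), Finset.card_univ, ZMod.card]
  have hsubE : ∀ t, Finset.univ.filter (fun s : ZMod k =>
      i s ∈ (Finset.Icc 1 n).image (fun d : ℕ => i t + (d : ZMod m))) ⊆
      Finset.univ.erase t := by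
    intro t x hx
    rw [Finset.mem_erase]
    exact ⟨fun he => hnotself t (he ▸ hx), Finset.mem_univ _⟩
  constructor
  · intro t
    rw [hg t]
    have := Finset.card_le_card (hsubE t)
    rw [herase t] at this
    exact this
  · rintro ⟨t, ht⟩
    have hcont : ∃ j : ZMod m, ∀ s, ∃ d ≤ n, i s = j + (d : ZMod m) := by
      rcases ht with ht0 | htk
      · -- g t = 0
        have hfe : Finset.univ.filter (fun s : ZMod k =>
            i s ∈ (Finset.Icc 1 n).image (fun d : ℕ => i t + (d : ZMod m))) = ∅ := by
          apply Finset.card_eq_zero.mp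
          rw [← hg t]; exact ht0
        have hempty : ∀ s, i s ∉ (Finset.Icc 1 n).image (fun d : ℕ => i t + (d : ZMod m)) := by
          intro s hs
          have : s ∈ (∅ : Finset (ZMod k)) := hfe ▸ Finset.mem_filter.mpr ⟨Finset.mem_univ _, hs⟩
          simp at this
        refine ⟨i t + ((n+1 : ℕ) : ZMod m), fun s => ?_⟩
        set v := (i s - i t).val with hv_def
        have hv : v < m := ZMod.val_lt _
        have his : i s = i t + (v : ZMod m) := by
          rw [hv_def, ZMod.natCast_rightInverse (i s - i t)]; ring
        have hv0 : v = 0 ∨ n + 1 ≤ v := by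
          by_contra hcon
          push_neg at hcon
          exact hempty s (Finset.mem_image.mpr
            ⟨v, Finset.mem_Icc.mpr ⟨by omega, by omega⟩, his.symm⟩)
        have hsum : ((n+1 : ℕ) : ZMod m) + ((n : ℕ) : ZMod m) = 0 := by
          rw [← Nat.cast_add, show n + 1 + n = m by omega, ZMod.natCast_self]
        rcases hv0 with hv0 | hv0
        · refine ⟨n, le_refl n, ?_⟩
          rw [his, hv0, add_assoc, hsum]
          simp
        · obtain ⟨d, hd, hveq⟩ : ∃ d, d ≤ n ∧ v = (n+1) + d :=
            ⟨v - (n+1), by omega, by omega⟩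
          refine ⟨d, hd, ?_⟩
          rw [his, hveq]
          push_cast
          ring
      · -- g t = k - 1
        have heq : Finset.univ.filter (fun s : ZMod k =>
            i s ∈ (Finset.Icc 1 n).image (fun d : ℕ => i t + (d : ZMod m))) =
            Finset.univ.erase t := by
          apply Finset.eq_of_subset_of_card_le (hsubE t)
          rw [herase t, ← hg t, htk]
        refine ⟨i t, fun s => ?_⟩
        by_cases hst : s = t
        · exact ⟨0, Nat.zero_le _, by rw [hst]; simp⟩
        · have : s ∈ Finset.univ.filter (fun s : ZMod k =>
              i s ∈ (Finset.Icc 1 n).image (fun d : ℕ => i t + (d : ZMod m))) := by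
            rw [heq]; exact Finset.mem_erase.mpr ⟨hst, Finset.mem_univ _⟩
          have hmem := (Finset.mem_filter.mp this).2
          obtain ⟨d, hd, hds⟩ := Finset.mem_image.mp hmem
          exact ⟨d, (Finset.mem_Icc.mp hd).2, hds.symm⟩
    obtain ⟨j, hcont⟩ := hcont
    refine ⟨⟨j, fun s => ?_⟩, aux_map m k n hmn i hinj g hg j hcont⟩
    obtain ⟨d, hd, hds⟩ := hcont s
    exact Finset.mem_image.mpr ⟨d, Finset.mem_range.mpr (by omega), hds.symm⟩
end

section
/- For k = 3, the only possible value multisets of g (up to cyclic relabeling of the three members) are {2,1,0} and {1,1,1}; for k = 4 they are {3,2,1,0} and {2,2,1,1}. -/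
private lemma zmem_iff (m : ℕ) [NeZero m] (x y : ZMod m) :
    (y ∈ (Finset.Icc 1 ((m-1)/2)).image (fun d : ℕ => x + (d : ZMod m))) ↔
    (y - x).val ∈ Finset.Icc 1 ((m-1)/2) := by
  have hm := Nat.pos_of_ne_zero (NeZero.ne m)
  simp only [Finset.mem_image, Finset.mem_Icc]
  constructor
  · rintro ⟨d, ⟨h1, h2⟩, rfl⟩
    have hd : d < m := by omega
    have : (x + (d : ZMod m) - x) = (d : ZMod m) := by ring
    rw [this, ZMod.val_cast_of_lt hd]
    exact ⟨h1, h2⟩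
  · rintro ⟨h1, h2⟩
    refine ⟨(y - x).val, ⟨h1, h2⟩, ?_⟩
    rw [ZMod.natCast_zmod_val]
    ring

private lemma zasymm {m : ℕ} [NeZero m] (hm : Odd m) {x y : ZMod m} (hxy : x ≠ y) :
    ((y - x).val ∈ Finset.Icc 1 ((m-1)/2)) ↔ ¬ ((x - y).val ∈ Finset.Icc 1 ((m-1)/2)) := by
  obtain ⟨j, rfl⟩ := hm
  have hne : y - x ≠ 0 := sub_ne_zero.mpr (Ne.symm hxy)
  have h1 : (y - x).val ≠ 0 := fun h => hne ((ZMod.val_eq_zero _).mp h)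
  have h2 : (y - x).val < 2*j+1 := ZMod.val_lt _
  have h3 : (x - y).val = (2*j+1) - (y - x).val := by
    have hxy' : x - y = -(y - x) := by ring
    haveI : NeZero (y - x) := ⟨hne⟩
    rw [hxy', ZMod.val_neg_of_ne_zero]
  simp only [Finset.mem_Icc]
  omega

private lemma exists_zero_aux {m k : ℕ} [NeZero m] [NeZero k] (hm : Odd m) (hk2 : 2 ≤ k)
    (i : ZMod k → ZMod m) (hinj : Function.Injective i) (t : ZMod k)
    (hmax : ∀ s, s ≠ t → (i s - i t).val ∈ Finset.Icc 1 ((m-1)/2)) :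
    ∃ u, ∀ s, (i s - i u).val ∉ Finset.Icc 1 ((m-1)/2) := by
  obtain ⟨j, hmj⟩ := hm
  have hne : (Finset.univ.erase t).Nonempty := by
    rw [← Finset.card_pos, Finset.card_erase_of_mem (Finset.mem_univ t), Finset.card_univ,
      ZMod.card]
    omega
  obtain ⟨u, hu, humax⟩ := Finset.exists_max_image (Finset.univ.erase t)
    (fun s => (i s - i t).val) hne
  have hut : u ≠ t := Finset.ne_of_mem_erase hu
  refine ⟨u, fun s => ?_⟩
  have hb := hmax u hut
  simp only [Finset.mem_Icc] at hb ⊢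
  by_cases hsu : s = u
  · subst hsu
    rw [sub_self, ZMod.val_zero]
    omega
  by_cases hst : s = t
  · rw [hst]
    have hnz : (i u - i t) ≠ 0 := sub_ne_zero.mpr (fun h => hut (hinj h))
    haveI : NeZero (i u - i t) := ⟨hnz⟩
    have h4 : (i t - i u) = -(i u - i t) := by ring
    rw [h4, ZMod.val_neg_of_ne_zero]
    have := ZMod.val_lt (i u - i t)
    omega
  · have ha := hmax s hst
    simp only [Finset.mem_Icc] at ha
    have hle : (i s - i t).val ≤ (i u - i t).val :=
      humax s (Finset.mem_erase.mpr ⟨hst, Finset.mem_univ s⟩)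
    have hneq : (i s - i t).val ≠ (i u - i t).val := by
      intro h
      exact hsu (hinj (sub_left_inj.mp (ZMod.val_injective m h)))
    have hnz : i u - i s ≠ 0 := sub_ne_zero.mpr (fun h => hsu (hinj h.symm))
    haveI : NeZero (i u - i s) := ⟨hnz⟩
    have h2 : (i u - i s).val = (i u - i t).val - (i s - i t).val := by
      have h1 : (i u - i s) = (i u - i t) - (i s - i t) := by ring
      rw [h1, ZMod.val_sub hle]
    have h3 : (i s - i u) = -(i u - i s) := by ring
    rw [h3, ZMod.val_neg_of_ne_zero, h2]
    omega

private lemma exists_full_aux {m k : ℕ} [NeZero m] [NeZero k] (hm : Odd m) (hk2 : 2 ≤ k)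
    (i : ZMod k → ZMod m) (hinj : Function.Injective i) (t : ZMod k)
    (hmin : ∀ s, s ≠ t → (i s - i t).val ∉ Finset.Icc 1 ((m-1)/2)) :
    ∃ u, ∀ s, s ≠ u → (i s - i u).val ∈ Finset.Icc 1 ((m-1)/2) := by
  obtain ⟨j, hmj⟩ := hm
  have hbig : ∀ s, s ≠ t → j + 1 ≤ (i s - i t).val ∧ (i s - i t).val ≤ 2*j := by
    intro s hs
    have h0 : (i s - i t) ≠ 0 := sub_ne_zero.mpr (fun h => hs (hinj h))
    have h1 : (i s - i t).val ≠ 0 := fun h => h0 ((ZMod.val_eq_zero _).mp h)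
    have h2 : (i s - i t).val < m := ZMod.val_lt _
    have h3 := hmin s hs
    simp only [Finset.mem_Icc] at h3
    omega
  have hne : (Finset.univ.erase t).Nonempty := by
    rw [← Finset.card_pos, Finset.card_erase_of_mem (Finset.mem_univ t), Finset.card_univ,
      ZMod.card]
    omega
  obtain ⟨u, hu, humin⟩ := Finset.exists_min_image (Finset.univ.erase t)
    (fun s => (i s - i t).val) hne
  have hut : u ≠ t := Finset.ne_of_mem_erase hu
  have hb := hbig u hut
  refine ⟨u, fun s hsu => ?_⟩
  simp only [Finset.mem_Icc]
  by_cases hst : s = t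
  · rw [hst]
    have hnz : (i u - i t) ≠ 0 := sub_ne_zero.mpr (fun h => hut (hinj h))
    haveI : NeZero (i u - i t) := ⟨hnz⟩
    have h4 : (i t - i u) = -(i u - i t) := by ring
    rw [h4, ZMod.val_neg_of_ne_zero]
    omega
  · have ha := hbig s hst
    have hle : (i u - i t).val ≤ (i s - i t).val :=
      humin s (Finset.mem_erase.mpr ⟨hst, Finset.mem_univ s⟩)
    have hneq : (i s - i t).val ≠ (i u - i t).val := by
      intro h
      exact hsu (hinj (sub_left_inj.mp (ZMod.val_injective m h)))
    have h2 : (i s - i u).val = (i s - i t).val - (i u - i t).val := by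
      have h1 : (i s - i u) = (i s - i t) - (i u - i t) := by ring
      rw [h1, ZMod.val_sub hle]
    rw [h2]
    omega

private lemma sum_g_aux {m k : ℕ} [NeZero m] [NeZero k] (hm : Odd m)
    (i : ZMod k → ZMod m) (hinj : Function.Injective i) :
    2 * ∑ t : ZMod k,
        (Finset.univ.filter (fun s => (i s - i t).val ∈ Finset.Icc 1 ((m-1)/2))).card
      = k * (k - 1) := by
  have hcard : ∀ t : ZMod k,
      (Finset.univ.filter (fun s => (i s - i t).val ∈ Finset.Icc 1 ((m-1)/2))).card
      = ∑ s : ZMod k, if (i s - i t).val ∈ Finset.Icc 1 ((m-1)/2) then 1 else 0 :=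
    fun t => Finset.card_filter _ _
  simp only [hcard]
  rw [two_mul]
  nth_rewrite 2 [Finset.sum_comm]
  rw [← Finset.sum_add_distrib]
  have hpt : ∀ t : ZMod k,
      (∑ s : ZMod k, ((if (i s - i t).val ∈ Finset.Icc 1 ((m-1)/2) then 1 else 0) +
       (if (i t - i s).val ∈ Finset.Icc 1 ((m-1)/2) then 1 else 0))) = k - 1 := by
    intro t
    have step : ∀ s : ZMod k,
        ((if (i s - i t).val ∈ Finset.Icc 1 ((m-1)/2) then 1 else 0) +
         (if (i t - i s).val ∈ Finset.Icc 1 ((m-1)/2) then (1:ℕ) else 0)) =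
        if s = t then 0 else 1 := by
      intro s
      by_cases h : s = t
      · subst h
        simp [Finset.mem_Icc]
      · have hiff := zasymm hm (x := i t) (y := i s) (fun he => h (hinj he.symm))
        by_cases h2 : (i s - i t).val ∈ Finset.Icc 1 ((m-1)/2)
        · simp [h, h2, hiff.mp h2]
        · have : (i t - i s).val ∈ Finset.Icc 1 ((m-1)/2) := by
            by_contra h3
            exact h2 (hiff.mpr h3)
          simp [h, h2, this]
    calc (∑ s : ZMod k, ((if (i s - i t).val ∈ Finset.Icc 1 ((m-1)/2) then 1 else 0) +
       (if (i t - i s).val ∈ Finset.Icc 1 ((m-1)/2) then 1 else 0)))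
        = ∑ s : ZMod k, (if s = t then 0 else 1) := Finset.sum_congr rfl (fun s _ => step s)
      _ = (Finset.univ.filter (fun s : ZMod k => ¬ (s = t))).card := by
          rw [Finset.card_filter]
          refine Finset.sum_congr rfl (fun s _ => ?_)
          by_cases h : s = t <;> simp [h]
      _ = k - 1 := by
          have : (Finset.univ.filter (fun s : ZMod k => ¬ (s = t))) = Finset.univ.erase t := by
            rw [← Finset.filter_ne']
          rw [this, Finset.card_erase_of_mem (Finset.mem_univ t), Finset.card_univ, ZMod.card]
  have hstep : (∑ t : ZMod k,
      ((∑ s : ZMod k, if (i s - i t).val ∈ Finset.Icc 1 ((m-1)/2) then 1 else 0) +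
        ∑ s : ZMod k, if (i t - i s).val ∈ Finset.Icc 1 ((m-1)/2) then 1 else 0))
      = ∑ _t : ZMod k, (k - 1) :=
    Finset.sum_congr rfl (fun t _ => by rw [← Finset.sum_add_distrib]; exact hpt t)
  rw [hstep, Finset.sum_const, Finset.card_univ, ZMod.card, smul_eq_mul]

/-- With `g` the almost-semicircle counting function of a `k`-element subset of
`ZMod m` (`m` odd, `k ≤ m`): for `k = 3` the only possible value multisets of `g`
are `{2,1,0}` and `{1,1,1}`; for `k = 4` they are `{3,2,1,0}` and `{2,2,1,1}`. -/
theorem stmt_5 (m k : ℕ) [NeZero m] [NeZero k] (hm : Odd m) (hk : k ≤ m)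
    (i : ZMod k → ZMod m) (hinj : Function.Injective i)
    (g : ZMod k → ℕ)
    (hg : ∀ t, g t = (Finset.univ.filter (fun s : ZMod k =>
        i s ∈ (Finset.Icc 1 ((m-1)/2)).image (fun d : ℕ => i t + (d : ZMod m)))).card) :
    (k = 3 → Finset.univ.val.map g = ({2,1,0} : Multiset ℕ) ∨
             Finset.univ.val.map g = ({1,1,1} : Multiset ℕ)) ∧
    (k = 4 → Finset.univ.val.map g = ({3,2,1,0} : Multiset ℕ) ∨
             Finset.univ.val.map g = ({2,2,1,1} : Multiset ℕ)) := by
  have hgR : ∀ t, g t = (Finset.univ.filter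
      (fun s => (i s - i t).val ∈ Finset.Icc 1 ((m-1)/2))).card := by
    intro t
    rw [hg t]
    congr 1
    apply Finset.filter_congr
    intro s _
    exact zmem_iff m (i t) (i s)
  have hnotself : ∀ t : ZMod k, (i t - i t).val ∉ Finset.Icc 1 ((m-1)/2) := by
    intro t
    rw [sub_self, ZMod.val_zero]
    simp
  have hsubE : ∀ t : ZMod k,
      (Finset.univ.filter (fun s => (i s - i t).val ∈ Finset.Icc 1 ((m-1)/2)))
        ⊆ Finset.univ.erase t := by
    intro t s hs
    rw [Finset.mem_filter] at hs
    refine Finset.mem_erase.mpr ⟨?_, Finset.mem_univ s⟩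
    intro h
    subst h
    exact hnotself s hs.2
  have hbound : ∀ t, g t ≤ k - 1 := by
    intro t
    rw [hgR t]
    calc _ ≤ (Finset.univ.erase t).card := Finset.card_le_card (hsubE t)
      _ = k - 1 := by
          rw [Finset.card_erase_of_mem (Finset.mem_univ t), Finset.card_univ, ZMod.card]
  have hsum : 2 * ∑ t, g t = k * (k - 1) := by
    simp only [hgR]
    exact sum_g_aux hm i hinj
  have hfull : ∀ t, g t = k - 1 → ∀ s, s ≠ t → (i s - i t).val ∈ Finset.Icc 1 ((m-1)/2) := by
    intro t ht
    rw [hgR t] at ht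
    have heq : (Finset.univ.filter (fun s => (i s - i t).val ∈ Finset.Icc 1 ((m-1)/2)))
        = Finset.univ.erase t := by
      apply Finset.eq_of_subset_of_card_le (hsubE t)
      rw [ht, Finset.card_erase_of_mem (Finset.mem_univ t), Finset.card_univ, ZMod.card]
    intro s hs
    have : s ∈ Finset.univ.erase t := Finset.mem_erase.mpr ⟨hs, Finset.mem_univ s⟩
    rw [← heq, Finset.mem_filter] at this
    exact this.2
  have hempty : ∀ t, g t = 0 → ∀ s, (i s - i t).val ∉ Finset.Icc 1 ((m-1)/2) := by
    intro t ht s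
    rw [hgR t, Finset.card_eq_zero, Finset.filter_eq_empty_iff] at ht
    exact ht (Finset.mem_univ s)
  have hUmax : ∀ s t, g s = k - 1 → g t = k - 1 → s = t := by
    intro s t hs ht
    by_contra hne
    have h1 := hfull t ht s hne
    have h2 := hfull s hs t (Ne.symm hne)
    have := (zasymm hm (x := i t) (y := i s)
      (fun he => hne (hinj he.symm))).mp h1
    exact this h2
  have hKmax : 2 ≤ k → ∀ t, g t = k - 1 → ∃ u, g u = 0 := by
    intro hk2 t ht
    obtain ⟨u, hu⟩ := exists_zero_aux hm hk2 i hinj t (hfull t ht)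
    refine ⟨u, ?_⟩
    rw [hgR u, Finset.card_eq_zero, Finset.filter_eq_empty_iff]
    exact fun s _ => hu s
  have hKzero : 2 ≤ k → ∀ t, g t = 0 → ∃ u, g u = k - 1 := by
    intro hk2 t ht
    obtain ⟨u, hu⟩ := exists_full_aux hm hk2 i hinj t (fun s _ => hempty t ht s)
    refine ⟨u, ?_⟩
    rw [hgR u]
    have heq : (Finset.univ.filter (fun s => (i s - i u).val ∈ Finset.Icc 1 ((m-1)/2)))
        = Finset.univ.erase u := by
      apply Finset.eq_of_subset_of_card_le (hsubE u)
      apply Finset.card_le_card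
      intro s hs
      rw [Finset.mem_erase] at hs
      rw [Finset.mem_filter]
      exact ⟨Finset.mem_univ s, hu s hs.1⟩
    rw [heq, Finset.card_erase_of_mem (Finset.mem_univ u), Finset.card_univ, ZMod.card]
  constructor
  · -- k = 3
    intro hk3
    subst hk3
    obtain ⟨a, b, c, ha, hb, hc⟩ : ∃ a b c, g 0 = a ∧ g 1 = b ∧ g 2 = c :=
      ⟨_, _, _, rfl, rfl, rfl⟩
    have huniv : (Finset.univ : Finset (ZMod 3)).val = ({0,1,2} : Multiset (ZMod 3)) := by
      rfl
    have hmap : Finset.univ.val.map g = ({a, b, c} : Multiset ℕ) := by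
      rw [huniv]
      simp [Multiset.insert_eq_cons, ha, hb, hc]
    have hS : a + b + c = 3 := by
      have h1 : ∑ t : ZMod 3, g t = (Finset.univ.val.map g).sum := rfl
      rw [hmap] at h1
      have h2 : ({a, b, c} : Multiset ℕ).sum = a + b + c := by
        simp [Multiset.insert_eq_cons]
        ring
      rw [h2] at h1
      omega
    have hba : a ≤ 2 := by have := hbound 0; omega
    have hbb : b ≤ 2 := by have := hbound 1; omega
    have hbc : c ≤ 2 := by have := hbound 2; omega
    rw [hmap]
    interval_cases a <;> interval_cases b <;> interval_cases c <;>
      first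
        | (left; decide)
        | (right; decide)
        | omega
  · -- k = 4
    intro hk4
    subst hk4
    obtain ⟨a, b, c, d, ha, hb, hc, hd⟩ : ∃ a b c d, g 0 = a ∧ g 1 = b ∧ g 2 = c ∧ g 3 = d :=
      ⟨_, _, _, _, rfl, rfl, rfl, rfl⟩
    have huniv : (Finset.univ : Finset (ZMod 4)).val = ({0,1,2,3} : Multiset (ZMod 4)) := by
      rfl
    have hmap : Finset.univ.val.map g = ({a, b, c, d} : Multiset ℕ) := by
      rw [huniv]
      simp [Multiset.insert_eq_cons, ha, hb, hc, hd]
    have hS : a + b + c + d = 6 := by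
      have h1 : ∑ t : ZMod 4, g t = (Finset.univ.val.map g).sum := rfl
      rw [hmap] at h1
      have h2 : ({a, b, c, d} : Multiset ℕ).sum = a + b + c + d := by
        simp [Multiset.insert_eq_cons]
        ring
      rw [h2] at h1
      omega
    have hba : a ≤ 3 := by have := hbound 0; omega
    have hbb : b ≤ 3 := by have := hbound 1; omega
    have hbc : c ≤ 3 := by have := hbound 2; omega
    have hbd : d ≤ 3 := by have := hbound 3; omega
    have hall : ∀ u : ZMod 4, u = 0 ∨ u = 1 ∨ u = 2 ∨ u = 3 := by decide
    have hval : ∀ u : ZMod 4, g u = a ∨ g u = b ∨ g u = c ∨ g u = d := by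
      intro u
      rcases hall u with h|h|h|h <;> subst h
      · exact Or.inl ha
      · exact Or.inr (Or.inl hb)
      · exact Or.inr (Or.inr (Or.inl hc))
      · exact Or.inr (Or.inr (Or.inr hd))
    have hpair : ∀ x y : ZMod 4, x ≠ y → ¬(g x = 3 ∧ g y = 3) := by
      rintro x y hxy ⟨h1, h2⟩
      exact hxy (hUmax x y (by omega) (by omega))
    have p01 : ¬(a = 3 ∧ b = 3) := fun ⟨h1, h2⟩ =>
      hpair 0 1 (by decide) ⟨ha.trans h1, hb.trans h2⟩
    have p02 : ¬(a = 3 ∧ c = 3) := fun ⟨h1, h2⟩ =>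
      hpair 0 2 (by decide) ⟨ha.trans h1, hc.trans h2⟩
    have p03 : ¬(a = 3 ∧ d = 3) := fun ⟨h1, h2⟩ =>
      hpair 0 3 (by decide) ⟨ha.trans h1, hd.trans h2⟩
    have p12 : ¬(b = 3 ∧ c = 3) := fun ⟨h1, h2⟩ =>
      hpair 1 2 (by decide) ⟨hb.trans h1, hc.trans h2⟩
    have p13 : ¬(b = 3 ∧ d = 3) := fun ⟨h1, h2⟩ =>
      hpair 1 3 (by decide) ⟨hb.trans h1, hd.trans h2⟩
    have p23 : ¬(c = 3 ∧ d = 3) := fun ⟨h1, h2⟩ =>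
      hpair 2 3 (by decide) ⟨hc.trans h1, hd.trans h2⟩
    have himp1 : (a = 3 ∨ b = 3 ∨ c = 3 ∨ d = 3) → (a = 0 ∨ b = 0 ∨ c = 0 ∨ d = 0) := by
      intro h
      have hex : ∃ t : ZMod 4, g t = 3 := by
        rcases h with h|h|h|h
        exacts [⟨0, ha.trans h⟩, ⟨1, hb.trans h⟩, ⟨2, hc.trans h⟩, ⟨3, hd.trans h⟩]
      obtain ⟨t, ht⟩ := hex
      obtain ⟨u, hu⟩ := hKmax (by omega) t (by omega)
      rcases hval u with h'|h'|h'|h' <;> omega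
    have himp2 : (a = 0 ∨ b = 0 ∨ c = 0 ∨ d = 0) → (a = 3 ∨ b = 3 ∨ c = 3 ∨ d = 3) := by
      intro h
      have hex : ∃ t : ZMod 4, g t = 0 := by
        rcases h with h|h|h|h
        exacts [⟨0, ha.trans h⟩, ⟨1, hb.trans h⟩, ⟨2, hc.trans h⟩, ⟨3, hd.trans h⟩]
      obtain ⟨t, ht⟩ := hex
      obtain ⟨u, hu⟩ := hKzero (by omega) t ht
      rcases hval u with h'|h'|h'|h' <;> omega
    rw [hmap]
    interval_cases a <;> interval_cases b <;> interval_cases c <;> interval_cases d <;>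
      first
        | (left; decide)
        | (right; decide)
        | omega
end

section
/- Let m ≥ 5 be odd. The graph whose vertices are triples {i_1, i_2, i_3} ⊆ Z/m with all cyclic gaps ≤ (m−1)/2, with an edge between two triples whenever they differ in exactly one element, is connected. -/
namespace Stmt7

variable {m k : ℕ} [NeZero m]

abbrev Vt (m k : ℕ) : Type _ := {s : Finset (ZMod m) // s.card = 3 ∧
    ∀ a ∈ s, ∃ d ∈ Finset.Icc 1 k, a + (d : ZMod m) ∈ s}

abbrev Gr (m k : ℕ) : SimpleGraph (Vt m k) :=
  SimpleGraph.fromRel (fun u v => (u.1 ∩ v.1).card = 2)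

lemma cast_ne0 (hmk : m = 2*k+1) {g : ℕ} (h1 : 1 ≤ g) (h2 : g ≤ 2*k) :
    (g : ZMod m) ≠ 0 := by
  intro h
  rw [ZMod.natCast_eq_zero_iff] at h
  have := Nat.le_of_dvd (by omega) h
  omega

lemma cast_injj (hmk : m = 2*k+1) {g g' : ℕ} (hg : g ≤ 2*k) (hg' : g' ≤ 2*k)
    (h : (g : ZMod m) = g') : g = g' := by
  have h2 := (ZMod.natCast_eq_natCast_iff _ _ _).1 h
  have h3 : g % m = g' % m := h2
  rwa [Nat.mod_eq_of_lt (by omega), Nat.mod_eq_of_lt (by omega)] at h3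

lemma addg_ne (hmk : m = 2*k+1) (a : ZMod m) {g g' : ℕ} (hg : g ≤ 2*k) (hg' : g' ≤ 2*k)
    (hne : g ≠ g') : a + (g : ZMod m) ≠ a + (g' : ZMod m) :=
  fun h => hne (cast_injj hmk hg hg' (add_left_cancel h))

lemma addg_ne0 (hmk : m = 2*k+1) (a : ZMod m) {g : ℕ} (h1 : 1 ≤ g) (h2 : g ≤ 2*k) :
    a ≠ a + (g : ZMod m) := by
  have := addg_ne hmk a (g := 0) (g' := g) (by omega) h2 (by omega)
  simpa using this

def ok (k g1 g2 : ℕ) : Prop := 1 ≤ g1 ∧ g1 ≤ k ∧ 1 ≤ g2 ∧ g2 ≤ k ∧ k + 1 ≤ g1 + g2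

def gset (m : ℕ) (a : ZMod m) (g1 g2 : ℕ) : Finset (ZMod m) :=
  {a, a + (g1 : ZMod m), a + ((g1 + g2 : ℕ) : ZMod m)}

lemma gset_card (hmk : m = 2*k+1) (a : ZMod m) {g1 g2 : ℕ} (h : ok k g1 g2) :
    (gset m a g1 g2).card = 3 := by
  obtain ⟨h1, h2, h3, h4, h5⟩ := h
  have n1 : a ≠ a + (g1 : ZMod m) := addg_ne0 hmk a h1 (by omega)
  have n2 : a ≠ a + ((g1+g2 : ℕ) : ZMod m) := addg_ne0 hmk a (by omega) (by omega)
  have n3 : a + (g1 : ZMod m) ≠ a + ((g1+g2 : ℕ) : ZMod m) :=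
    addg_ne hmk a (by omega) (by omega) (by omega)
  rw [gset, Finset.card_insert_of_notMem (by
      simp only [Finset.mem_insert, Finset.mem_singleton]
      push_neg
      exact ⟨n1, n2⟩),
    Finset.card_insert_of_notMem (by
      simp only [Finset.mem_singleton]
      exact n3), Finset.card_singleton]

lemma gset_bal (hmk : m = 2*k+1) (a : ZMod m) {g1 g2 : ℕ} (h : ok k g1 g2) :
    ∀ x ∈ gset m a g1 g2, ∃ d ∈ Finset.Icc 1 k, x + (d : ZMod m) ∈ gset m a g1 g2 := by
  obtain ⟨h1, h2, h3, h4, h5⟩ := h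
  intro x hx
  simp only [gset, Finset.mem_insert, Finset.mem_singleton] at hx
  rcases hx with rfl | rfl | rfl
  · exact ⟨g1, Finset.mem_Icc.2 ⟨h1, h2⟩, by simp [gset]⟩
  · refine ⟨g2, Finset.mem_Icc.2 ⟨h3, h4⟩, ?_⟩
    have e : a + (g1 : ZMod m) + (g2 : ZMod m) = a + ((g1+g2 : ℕ) : ZMod m) := by
      push_cast; ring
    rw [e]; simp [gset]
  · refine ⟨m - (g1+g2), Finset.mem_Icc.2 ⟨by omega, by omega⟩, ?_⟩
    have e : a + ((g1+g2 : ℕ) : ZMod m) + ((m - (g1+g2) : ℕ) : ZMod m) = a := by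
      have e2 : ((g1+g2 : ℕ) : ZMod m) + ((m - (g1+g2) : ℕ) : ZMod m) = 0 := by
        rw [← Nat.cast_add]
        have e3 : g1 + g2 + (m - (g1+g2)) = m := by omega
        rw [e3, ZMod.natCast_self]
      rw [add_assoc, e2, add_zero]
    rw [e]; simp [gset]

def vtx (m k : ℕ) [NeZero m] (hmk : m = 2*k+1) (a : ZMod m) (g1 g2 : ℕ) (h : ok k g1 g2) :
    Vt m k :=
  ⟨gset m a g1 g2, gset_card hmk a h, gset_bal hmk a h⟩

lemma vtx_eq (hmk : m = 2*k+1) {a a' : ZMod m} {g1 g1' g2 g2' : ℕ}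
    (h : ok k g1 g2) (h' : ok k g1' g2')
    (ea : a = a') (e1 : g1 = g1') (e2 : g2 = g2') :
    vtx m k hmk a g1 g2 h = vtx m k hmk a' g1' g2' h' := by
  subst ea; subst e1; subst e2; rfl

lemma req {u v : Vt m k} (h : u = v) : (Gr m k).Reachable u v := by
  rw [h]

lemma reach_swap (u v : Vt m k) {x y cu cv : ZMod m}
    (hu : u.1 = {x, y, cu}) (hv : v.1 = {x, y, cv})
    (hxy : x ≠ y) (hcux : cu ≠ x) (hcuy : cu ≠ y) (hcvx : cv ≠ x) (hcvy : cv ≠ y) :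
    (Gr m k).Reachable u v := by
  rcases eq_or_ne cu cv with rfl | hne
  · exact req (Subtype.ext (hu.trans hv.symm))
  · apply SimpleGraph.Adj.reachable
    rw [SimpleGraph.fromRel_adj]
    refine ⟨?_, Or.inl ?_⟩
    · intro h
      have h1 : u.1 = v.1 := congrArg Subtype.val h
      rw [hu, hv] at h1
      have hcu : cu ∈ ({x, y, cv} : Finset (ZMod m)) := by rw [← h1]; simp
      simp only [Finset.mem_insert, Finset.mem_singleton] at hcu
      tauto
    · rw [hu, hv]
      have hint : ({x, y, cu} : Finset (ZMod m)) ∩ {x, y, cv} = {x, y} := by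
        ext e
        simp only [Finset.mem_inter, Finset.mem_insert, Finset.mem_singleton]
        constructor
        · rintro ⟨he1, he2⟩
          rcases he1 with rfl | rfl | rfl
          · exact Or.inl rfl
          · exact Or.inr rfl
          · rcases he2 with h | h | h
            exacts [absurd h hcux, absurd h hcuy, absurd h hne]
        · rintro (rfl | rfl) <;> simp
      rw [hint, Finset.card_insert_of_notMem (by simp [hxy]), Finset.card_singleton]

lemma move3 (hmk : m = 2*k+1) (a : ZMod m) {g1 g2 g2' : ℕ}
    (h : ok k g1 g2) (h' : ok k g1 g2') :
    (Gr m k).Reachable (vtx m k hmk a g1 g2 h) (vtx m k hmk a g1 g2' h') := by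
  obtain ⟨h1, h2, h3, h4, h5⟩ := h
  obtain ⟨h1', h2', h3', h4', h5'⟩ := h'
  refine reach_swap _ _ (x := a) (y := a + (g1 : ZMod m))
    (cu := a + ((g1+g2 : ℕ) : ZMod m)) (cv := a + ((g1+g2' : ℕ) : ZMod m))
    rfl rfl ?_ ?_ ?_ ?_ ?_
  · exact addg_ne0 hmk a h1 (by omega)
  · exact (addg_ne0 hmk a (by omega) (by omega)).symm
  · exact (addg_ne hmk a (by omega) (by omega) (by omega))
  · exact (addg_ne0 hmk a (by omega) (by omega)).symm
  · exact (addg_ne hmk a (by omega) (by omega) (by omega))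

lemma move2 (hmk : m = 2*k+1) (a : ZMod m) {g1 g2 g1' g2' : ℕ}
    (h : ok k g1 g2) (h' : ok k g1' g2') (hs : g1 + g2 = g1' + g2') :
    (Gr m k).Reachable (vtx m k hmk a g1 g2 h) (vtx m k hmk a g1' g2' h') := by
  obtain ⟨h1, h2, h3, h4, h5⟩ := h
  obtain ⟨h1', h2', h3', h4', h5'⟩ := h'
  have hcast : ((g1'+g2' : ℕ) : ZMod m) = ((g1+g2 : ℕ) : ZMod m) := by rw [hs]
  refine reach_swap _ _ (x := a) (y := a + ((g1+g2 : ℕ) : ZMod m))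
    (cu := a + (g1 : ZMod m)) (cv := a + (g1' : ZMod m)) ?_ ?_ ?_ ?_ ?_ ?_ ?_
  · show gset m a g1 g2 = _
    rw [gset, Finset.pair_comm]
  · show gset m a g1' g2' = _
    rw [gset, hcast, Finset.pair_comm]
  · exact addg_ne0 hmk a (by omega) (by omega)
  · exact (addg_ne0 hmk a h1 (by omega)).symm
  · exact (addg_ne hmk a (by omega) (by omega) (by omega))
  · exact (addg_ne0 hmk a h1' (by omega)).symm
  · exact (addg_ne hmk a (by omega) (by omega) (by omega))

lemma ok_rot (hmk : m = 2*k+1) {g1 g2 : ℕ} (h : ok k g1 g2) : ok k g2 (m - (g1+g2)) := by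
  obtain ⟨h1, h2, h3, h4, h5⟩ := h
  exact ⟨by omega, by omega, by omega, by omega, by omega⟩

lemma rot (hmk : m = 2*k+1) (a : ZMod m) {g1 g2 : ℕ} (h : ok k g1 g2) :
    vtx m k hmk a g1 g2 h
      = vtx m k hmk (a + (g1 : ZMod m)) g2 (m - (g1+g2)) (ok_rot hmk h) := by
  apply Subtype.ext
  show gset m a g1 g2 = gset m (a + (g1 : ZMod m)) g2 (m - (g1+g2))
  obtain ⟨h1, h2, h3, h4, h5⟩ := h
  have e2 : a + (g1 : ZMod m) + (g2 : ZMod m) = a + ((g1+g2 : ℕ) : ZMod m) := by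
    push_cast; ring
  have e3 : a + (g1 : ZMod m) + ((g2 + (m - (g1+g2)) : ℕ) : ZMod m) = a := by
    have e : g2 + (m - (g1+g2)) = m - g1 := by omega
    rw [e, Nat.cast_sub (by omega), ZMod.natCast_self]
    ring
  rw [gset, gset, e2, e3]
  ext e
  simp only [Finset.mem_insert, Finset.mem_singleton]
  tauto

lemma ok_kkk (hmk : m = 2*k+1) (hk : 2 ≤ k) : ok k k k :=
  ⟨by omega, le_rfl, by omega, le_rfl, by omega⟩

lemma step (hmk : m = 2*k+1) (hk : 2 ≤ k) (a : ZMod m) :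
    (Gr m k).Reachable (vtx m k hmk a k k (ok_kkk hmk hk))
      (vtx m k hmk (a + 1) k k (ok_kkk hmk hk)) := by
  have okA : ok k k 1 := ⟨by omega, le_rfl, by omega, by omega, by omega⟩
  have okB : ok k k 2 := ⟨by omega, le_rfl, by omega, by omega, by omega⟩
  have okC : ok k 2 (k-1) := ⟨by omega, by omega, by omega, by omega, by omega⟩
  have okD : ok k 2 k := ⟨by omega, by omega, by omega, le_rfl, by omega⟩
  have okE : ok k k (k-1) := ⟨by omega, le_rfl, by omega, by omega, by omega⟩
  have hm0 : ((2*k+1 : ℕ) : ZMod m) = 0 := by rw [← hmk]; exact ZMod.natCast_self m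
  have e1 : vtx m k hmk a k k (ok_kkk hmk hk) = vtx m k hmk (a + (k : ZMod m)) k 1 okA := by
    rw [rot hmk a (ok_kkk hmk hk)]
    exact vtx_eq hmk _ _ rfl rfl (by omega)
  have r2 := move3 hmk (a + (k : ZMod m)) okA okB
  have e2 : vtx m k hmk (a + (k : ZMod m)) k 2 okB
      = vtx m k hmk (a + (k : ZMod m) + (k : ZMod m)) 2 (k-1) okC := by
    rw [rot hmk _ okB]
    exact vtx_eq hmk _ _ rfl rfl (by omega)
  have r3 := move3 hmk (a + (k : ZMod m) + (k : ZMod m)) okC okD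
  have e3 : vtx m k hmk (a + (k : ZMod m) + (k : ZMod m)) 2 k okD
      = vtx m k hmk (a + 1) k (k-1) okE := by
    rw [rot hmk _ okD]
    refine vtx_eq hmk _ _ ?_ rfl (by omega)
    push_cast at hm0 ⊢
    linear_combination hm0
  have r4 := move3 hmk (a + 1) okE (ok_kkk hmk hk)
  exact (req e1).trans (r2.trans ((req e2).trans (r3.trans ((req e3).trans r4))))

lemma translate (hmk : m = 2*k+1) (hk : 2 ≤ k) (a : ZMod m) (n : ℕ) :
    (Gr m k).Reachable (vtx m k hmk a k k (ok_kkk hmk hk))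
      (vtx m k hmk (a + (n : ZMod m)) k k (ok_kkk hmk hk)) := by
  induction n with
  | zero => exact req (vtx_eq hmk _ _ (by simp) rfl rfl)
  | succ n ih =>
      exact ih.trans ((step hmk hk (a + (n : ZMod m))).trans
        (req (vtx_eq hmk _ _ (by push_cast; ring) rfl rfl)))

lemma decomp (hmk : m = 2*k+1) (v : Vt m k) :
    ∃ (a : ZMod m) (g1 g2 : ℕ) (h : ok k g1 g2), v = vtx m k hmk a g1 g2 h := by
  obtain ⟨hcard, hbal⟩ := v.2
  obtain ⟨x, hx⟩ : v.1.Nonempty := Finset.card_pos.1 (by omega)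
  obtain ⟨d1, hd1m, hb⟩ := hbal x hx
  rw [Finset.mem_Icc] at hd1m
  obtain ⟨d2, hd2m, hc0⟩ := hbal _ hb
  rw [Finset.mem_Icc] at hd2m
  have hc' : x + (d1 : ZMod m) + (d2 : ZMod m) = x + ((d1+d2 : ℕ) : ZMod m) := by
    push_cast; ring
  rw [hc'] at hc0
  obtain ⟨d3, hd3m, hx3⟩ := hbal _ hc0
  rw [Finset.mem_Icc] at hd3m
  have hx3' : x + ((d1+d2 : ℕ) : ZMod m) + (d3 : ZMod m)
      = x + ((d1+d2+d3 : ℕ) : ZMod m) := by push_cast; ring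
  rw [hx3'] at hx3
  have nbx : x ≠ x + (d1 : ZMod m) := addg_ne0 hmk x hd1m.1 (by omega)
  have ncx : x ≠ x + ((d1+d2 : ℕ) : ZMod m) := addg_ne0 hmk x (by omega) (by omega)
  have nbc : x + (d1 : ZMod m) ≠ x + ((d1+d2 : ℕ) : ZMod m) :=
    addg_ne hmk x (by omega) (by omega) (by omega)
  have hsub : ({x, x + (d1 : ZMod m), x + ((d1+d2 : ℕ) : ZMod m)} : Finset (ZMod m)) ⊆ v.1 := by
    rw [Finset.insert_subset_iff, Finset.insert_subset_iff, Finset.singleton_subset_iff]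
    exact ⟨hx, hb, hc0⟩
  have hcard3 : ({x, x + (d1 : ZMod m), x + ((d1+d2 : ℕ) : ZMod m)} : Finset (ZMod m)).card = 3 := by
    rw [Finset.card_insert_of_notMem (by
        simp only [Finset.mem_insert, Finset.mem_singleton]
        push_neg
        exact ⟨nbx, ncx⟩),
      Finset.card_insert_of_notMem (by
        simp only [Finset.mem_singleton]
        exact nbc), Finset.card_singleton]
  have hveq : v.1 = {x, x + (d1 : ZMod m), x + ((d1+d2 : ℕ) : ZMod m)} :=
    (Finset.eq_of_subset_of_card_le hsub (by omega)).symm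
  rw [hveq] at hx3
  simp only [Finset.mem_insert, Finset.mem_singleton] at hx3
  have hsum0 : ((d1+d2+d3 : ℕ) : ZMod m) = 0 := by
    rcases hx3 with h | h | h
    · linear_combination h
    · exfalso
      have h0 : ((d2+d3 : ℕ) : ZMod m) = 0 := by push_cast at h ⊢; linear_combination h
      exact cast_ne0 hmk (by omega) (by omega) h0
    · exfalso
      have h0 : ((d3 : ℕ) : ZMod m) = 0 := by push_cast at h ⊢; linear_combination h
      exact cast_ne0 hmk (by omega) (by omega) h0
  have hsum : d1 + d2 + d3 = m := by
    by_contra hne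
    rcases lt_or_gt_of_ne hne with hlt | hgt
    · exact cast_ne0 hmk (by omega) (by omega) hsum0
    · have e : ((d1+d2+d3 - m : ℕ) : ZMod m) = 0 := by
        rw [Nat.cast_sub (by omega), hsum0, ZMod.natCast_self, sub_zero]
      exact cast_ne0 hmk (by omega) (by omega) e
  have hok : ok k d1 d2 := ⟨hd1m.1, hd1m.2, hd2m.1, hd2m.2, by omega⟩
  refine ⟨x, d1, d2, hok, Subtype.ext ?_⟩
  rw [show (vtx m k hmk x d1 d2 hok).1 = gset m x d1 d2 from rfl, gset, hveq]

lemma reach0 (hmk : m = 2*k+1) (hk : 2 ≤ k) (v : Vt m k) :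
    (Gr m k).Reachable v (vtx m k hmk 0 k k (ok_kkk hmk hk)) := by
  obtain ⟨a, g1, g2, h, rfl⟩ := decomp hmk v
  have hA : ok k k (g1+g2-k) := by
    obtain ⟨h1, h2, h3, h4, h5⟩ := h
    exact ⟨by omega, le_rfl, by omega, by omega, by omega⟩
  have r1 := move2 hmk a h hA (by obtain ⟨h1, h2, h3, h4, h5⟩ := h; omega)
  have r2 := move3 hmk a hA (ok_kkk hmk hk)
  have r3 := translate hmk hk a (ZMod.val (-a))
  have e : a + ((ZMod.val (-a) : ℕ) : ZMod m) = 0 := by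
    have : ((ZMod.val (-a) : ℕ) : ZMod m) = -a := ZMod.natCast_rightInverse (-a)
    rw [this, add_neg_cancel]
  exact r1.trans (r2.trans (r3.trans (req (vtx_eq hmk _ _ e rfl rfl))))

lemma main (m k : ℕ) [NeZero m] (hmk : m = 2*k+1) (hk : 2 ≤ k) : (Gr m k).Connected := by
  rw [SimpleGraph.connected_iff]
  refine ⟨fun u v => ?_, ⟨vtx m k hmk 0 k k (ok_kkk hmk hk)⟩⟩
  exact (reach0 hmk hk u).trans (reach0 hmk hk v).symm

end Stmt7

/-- Let `m ≥ 5` be odd.  The graph whose vertices are triples in `ZMod m` with all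
cyclic gaps at most `(m-1)/2` (equivalently: every member has another member in the
almost-semicircle of length `(m-1)/2` after it), with an edge between two triples
whenever they share exactly two elements, is connected. -/
theorem stmt_7 (m : ℕ) [NeZero m] (hm : Odd m) (hm5 : 5 ≤ m) :
    (SimpleGraph.fromRel (fun u v : {s : Finset (ZMod m) // s.card = 3 ∧
        ∀ a ∈ s, ∃ d ∈ Finset.Icc 1 ((m-1)/2), a + (d : ZMod m) ∈ s} =>
        (u.1 ∩ v.1).card = 2)).Connected := by
  obtain ⟨t, ht⟩ := hm
  have h1 : m = 2 * ((m-1)/2) + 1 := by omega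
  have h2 : 2 ≤ (m-1)/2 := by omega
  exact Stmt7.main m ((m-1)/2) h1 h2
end

section
/- The value of the (m,n) toric inequality on a K(2p)-vector with k A-members and 2p−k B-members equals #{(t,t') : g(t) + h(t') = p−1} − min{k, 2p−k}, where g and h are the almost-semicircle counting functions of the A-members in Z/m and the B-members in Z/n respectively. In particular, this value is independent of m and n, given the functions g and h. -/
open Finset

namespace Stmt11Aux

variable {N w q : ℕ} [NeZero N]

lemma repr_val (x : ZMod N) : ((x.val : ℕ) : ZMod N) = x := ZMod.natCast_rightInverse x

lemma val_eq_iff {c : ℕ} (hc : c < N) (x : ZMod N) : x.val = c ↔ x = (c : ZMod N) := by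
  constructor
  · intro h; rw [← repr_val x, h]
  · intro h; rw [h, ZMod.val_cast_of_lt hc]

/-- key shift lemma: subtracting (w+1) -/
lemma val_sub_shift (hN : N = 2*w+1) (x : ZMod N) :
    ((x - ((w : ZMod N) + 1)).val < w) ↔ (w < x.val) := by
  have hxv : x.val < N := ZMod.val_lt x
  have hw1 : ((w:ZMod N)+1) = ((w+1 : ℕ) : ZMod N) := by push_cast; ring
  by_cases h : w < x.val
  · have h1 : x - ((w:ZMod N)+1) = ((x.val - (w+1) : ℕ) : ZMod N) := by
      rw [hw1, ← repr_val x, ← Nat.cast_sub (by omega), ZMod.val_cast_of_lt hxv]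
    rw [h1, ZMod.val_cast_of_lt (by omega)]
    omega
  · have hz : ((w+1 : ℕ):ZMod N) + ((w:ZMod N)) = 0 := by
      have h2 : (((2*w+1 : ℕ)) : ZMod N) = 0 := by rw [← hN]; exact ZMod.natCast_self N
      rw [← h2]; push_cast; ring
    have h1 : x - ((w:ZMod N)+1) = ((x.val + w : ℕ) : ZMod N) := by
      rw [hw1, sub_eq_add_neg, neg_eq_of_add_eq_zero_right hz]
      rw [← repr_val x, ← Nat.cast_add, ZMod.val_cast_of_lt hxv]
    rw [h1, ZMod.val_cast_of_lt (by omega)]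
    omega

end Stmt11Aux

namespace Stmt11Aux

lemma val_add_w {N w : ℕ} [NeZero N] (hN : N = 2*w+1) (x : ZMod N) :
    (w < (x + (w : ZMod N)).val) ↔ (1 ≤ x.val ∧ x.val ≤ w) := by
  have hxv : x.val < N := ZMod.val_lt x
  have h1 : x + (w:ZMod N) = ((x.val + w : ℕ) : ZMod N) := by
    rw [← repr_val x, ← Nat.cast_add, ZMod.val_cast_of_lt hxv]
  by_cases h : x.val ≤ w
  · rw [h1, ZMod.val_cast_of_lt (by omega)]; omega
  · rw [h1, ZMod.val_natCast]
    have h2 : (x.val + w) % N = x.val + w - N := by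
      rw [Nat.mod_eq_sub_mod (by omega), Nat.mod_eq_of_lt (by omega)]
    omega

end Stmt11Aux

namespace Stmt11Aux

variable {N q : ℕ} [NeZero N]

/-- number of members in the half-open segment `[j, j+c)` -/
def cntLt (b : Fin q → ZMod N) (c : ℕ) (j : ZMod N) : ℕ :=
  (univ.filter fun t => (b t - j).val < c).card

/-- number of members in `(b t, b t + w]` -/
def cntMid (b : Fin q → ZMod N) (w : ℕ) (t : Fin q) : ℕ :=
  (univ.filter fun s => 1 ≤ (b s - b t).val ∧ (b s - b t).val ≤ w).card

lemma mem_range_image {c : ℕ} (hc : c ≤ N) (j x : ZMod N) :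
    x ∈ (range c).image (fun d : ℕ => j + (d : ZMod N)) ↔ (x - j).val < c := by
  simp only [mem_image, mem_range]
  constructor
  · rintro ⟨d, hd, rfl⟩
    rwa [add_sub_cancel_left, ZMod.val_cast_of_lt (by omega)]
  · intro hx
    exact ⟨(x - j).val, hx, by rw [repr_val, add_sub_cancel]⟩

lemma mem_Icc_image {w : ℕ} (hw : w < N) (j x : ZMod N) :
    x ∈ (Icc 1 w).image (fun d : ℕ => j + (d : ZMod N)) ↔
      1 ≤ (x - j).val ∧ (x - j).val ≤ w := by
  simp only [mem_image, mem_Icc]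
  constructor
  · rintro ⟨d, ⟨hd1, hd2⟩, rfl⟩
    rw [add_sub_cancel_left, ZMod.val_cast_of_lt (by omega)]
    exact ⟨hd1, hd2⟩
  · rintro ⟨h1, h2⟩
    exact ⟨(x - j).val, ⟨h1, h2⟩, by rw [repr_val, add_sub_cancel]⟩

lemma card_filter_eq_mem {b : Fin q → ZMod N} (hb : Function.Injective b) (v : ZMod N) :
    (univ.filter fun t => b t = v).card = if ∃ t, b t = v then 1 else 0 := by
  split_ifs with h
  · obtain ⟨t0, ht0⟩ := h
    have : (univ.filter fun t => b t = v) = {t0} := by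
      ext t; simp only [mem_filter, mem_univ, true_and, mem_singleton]
      constructor
      · intro ht; exact hb (ht.trans ht0.symm)
      · rintro rfl; exact ht0
    rw [this, card_singleton]
  · convert card_empty
    rw [filter_eq_empty_iff]
    intro t _ ht
    exact h ⟨t, ht⟩

lemma partition_lemma {w : ℕ} (hN : N = 2*w+1) {b : Fin q → ZMod N}
    (hb : Function.Injective b) (j : ZMod N) :
    cntLt b w j + ((if ∃ t, b t = j + (w : ZMod N) then 1 else 0)
      + cntLt b w (j + (w : ZMod N) + 1)) = q := by
  have key : ∀ t : Fin q,
      (if (b t - j).val < w then 1 else 0) + ((if b t = j + (w : ZMod N) then 1 else 0)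
        + (if (b t - (j + (w : ZMod N) + 1)).val < w then 1 else 0)) = 1 := by
    intro t
    have e3 : ((b t - (j + (w : ZMod N) + 1)).val < w) ↔ (w < (b t - j).val) := by
      rw [show b t - (j + (w : ZMod N) + 1) = (b t - j) - ((w : ZMod N) + 1) by ring]
      exact val_sub_shift hN _
    have e2 : (b t = j + (w : ZMod N)) ↔ ((b t - j).val = w) := by
      rw [val_eq_iff (by omega), sub_eq_iff_eq_add']
    simp only [e2, e3]
    split_ifs <;> omega
  calc cntLt b w j + ((if ∃ t, b t = j + (w : ZMod N) then 1 else 0)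
        + cntLt b w (j + (w : ZMod N) + 1))
      = (∑ t : Fin q, if (b t - j).val < w then 1 else 0)
        + ((∑ t : Fin q, if b t = j + (w : ZMod N) then 1 else 0)
          + (∑ t : Fin q, if (b t - (j + (w : ZMod N) + 1)).val < w then 1 else 0)) := by
        rw [cntLt, cntLt, card_filter, card_filter, ← card_filter_eq_mem hb, card_filter]
    _ = ∑ t : Fin q, ((if (b t - j).val < w then 1 else 0)
          + ((if b t = j + (w : ZMod N) then 1 else 0)
            + (if (b t - (j + (w : ZMod N) + 1)).val < w then 1 else 0))) := by
        rw [Finset.sum_add_distrib, Finset.sum_add_distrib]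
    _ = ∑ _t : Fin q, 1 := Finset.sum_congr rfl (fun t _ => key t)
    _ = q := by simp

end Stmt11Aux

namespace Stmt11Aux

variable {N w q : ℕ} [NeZero N]

/-- number of positions where the segment count is at most `c` -/
def Dlo (b : Fin q → ZMod N) (w : ℕ) (c : ℤ) : ℕ :=
  (univ.filter fun j : ZMod N => (cntLt b w j : ℤ) ≤ c).card

/-- number of special positions where the segment count equals `c` -/
def Mmid (b : Fin q → ZMod N) (w : ℕ) (c : ℤ) : ℕ :=
  (univ.filter fun j : ZMod N =>
    (∃ t, b t = j + (w : ZMod N)) ∧ (cntLt b w j : ℤ) = c).card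

lemma card_filter_translate (P : ZMod N → Prop) [DecidablePred P] (v : ZMod N) :
    (univ.filter fun j => P (j + v)).card = (univ.filter P).card := by
  apply Finset.card_bij (fun j _ => j + v)
  · intro j hj; simp only [mem_filter, mem_univ, true_and] at hj ⊢; exact hj
  · intro j1 _ j2 _ hj; exact add_right_cancel hj
  · intro x hx
    refine ⟨x - v, ?_, sub_add_cancel x v⟩
    simp only [mem_filter, mem_univ, true_and, sub_add_cancel] at hx ⊢
    exact hx

lemma G2 (hN : N = 2*w+1) {b : Fin q → ZMod N} (hb : Function.Injective b) (c : ℤ) :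
    Dlo b w c + Dlo b w ((q:ℤ)-1-c) = N + Mmid b w c := by
  have step1 : Dlo b w ((q:ℤ)-1-c) = (univ.filter fun j : ZMod N =>
      c + 1 ≤ (cntLt b w j : ℤ)
        + (if ∃ t, b t = j + (w : ZMod N) then 1 else 0)).card := by
    rw [Dlo, ← card_filter_translate
      (fun j => (cntLt b w j : ℤ) ≤ (q:ℤ)-1-c) ((w : ZMod N)+1)]
    apply congrArg
    apply filter_congr
    intro j _
    have hpart := partition_lemma hN hb j
    rw [← add_assoc] at hpart ⊢
    by_cases hE : ∃ t, b t = j + (w : ZMod N)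
    · simp only [if_pos hE] at hpart ⊢; omega
    · simp only [if_neg hE] at hpart ⊢; omega
  have step2 : ∀ j : ZMod N,
      (if c + 1 ≤ (cntLt b w j : ℤ)
          + (if ∃ t, b t = j + (w : ZMod N) then 1 else 0) then 1 else 0)
        + (if (cntLt b w j : ℤ) ≤ c then 1 else 0)
      = (if (∃ t, b t = j + (w : ZMod N)) ∧ (cntLt b w j : ℤ) = c then 1 else 0)
        + 1 := by
    intro j
    by_cases hE : ∃ t, b t = j + (w : ZMod N)
    · simp only [hE, true_and, if_pos hE]
      split_ifs <;> omega
    · simp only [hE, false_and, if_neg hE, if_false]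
      split_ifs <;> omega
  have hsum : Dlo b w ((q:ℤ)-1-c) + Dlo b w c = Mmid b w c + N := by
    rw [step1, Dlo, Mmid, card_filter, card_filter, card_filter, ← Finset.sum_add_distrib]
    rw [Finset.sum_congr rfl (fun j _ => step2 j), Finset.sum_add_distrib]
    simp [ZMod.card]
  omega

lemma G3 (hN : N = 2*w+1) {b : Fin q → ZMod N} (hb : Function.Injective b) (c : ℤ) :
    Mmid b w c = Mmid b w ((q:ℤ)-1-c) := by
  have h1 := G2 hN hb c
  have h2 := G2 hN hb ((q:ℤ)-1-c)
  rw [show (q:ℤ)-1-((q:ℤ)-1-c) = c by ring] at h2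
  omega

lemma G4pt (hN : N = 2*w+1) {b : Fin q → ZMod N} (hb : Function.Injective b) (t : Fin q) :
    cntLt b w (b t - (w : ZMod N)) + 1 + cntMid b w t = q := by
  have hpart := partition_lemma hN hb (b t - (w : ZMod N))
  have hE : ∃ s, b s = b t - (w : ZMod N) + (w : ZMod N) := ⟨t, by ring⟩
  rw [if_pos hE] at hpart
  have hmid : cntLt b w (b t - (w : ZMod N) + (w : ZMod N) + 1) = cntMid b w t := by
    rw [cntLt, cntMid]
    apply congrArg
    apply filter_congr
    intro s _
    rw [show b s - (b t - (w:ZMod N) + (w:ZMod N) + 1)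
        = (b s - b t + (w : ZMod N)) - ((w : ZMod N) + 1) by ring,
      val_sub_shift hN, val_add_w hN]
  omega

lemma G4 (hN : N = 2*w+1) {b : Fin q → ZMod N} (hb : Function.Injective b) (c : ℤ) :
    Mmid b w c = (univ.filter fun t : Fin q => (cntMid b w t : ℤ) = (q:ℤ)-1-c).card := by
  rw [Mmid]
  symm
  apply Finset.card_bij (fun t _ => b t - (w : ZMod N))
  · intro t ht
    simp only [mem_filter, mem_univ, true_and] at ht ⊢
    have hpt := G4pt hN hb t
    exact ⟨⟨t, by ring⟩, by omega⟩
  · intro t1 _ t2 _ hj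
    exact hb (by rwa [sub_left_inj] at hj)
  · intro j hj
    simp only [mem_filter, mem_univ, true_and] at hj
    obtain ⟨⟨s, hs⟩, hcnt⟩ := hj
    refine ⟨s, ?_, by rw [hs]; ring⟩
    simp only [mem_filter, mem_univ, true_and]
    have hpt := G4pt hN hb s
    rw [show b s - (w : ZMod N) = j by rw [hs]; ring] at hpt
    omega

lemma G5 (hN : N = 2*w+1) {b : Fin q → ZMod N} (hb : Function.Injective b) (c : ℤ) :
    (univ.filter fun t : Fin q => (cntMid b w t : ℤ) = c).card
      = (univ.filter fun t : Fin q => (cntMid b w t : ℤ) = (q:ℤ)-1-c).card := by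
  have h1 := G4 hN hb ((q:ℤ)-1-c)
  rw [show (q:ℤ)-1-((q:ℤ)-1-c) = c by ring] at h1
  calc (univ.filter fun t : Fin q => (cntMid b w t : ℤ) = c).card
      = Mmid b w ((q:ℤ)-1-c) := h1.symm
    _ = Mmid b w c := (G3 hN hb c).symm
    _ = (univ.filter fun t : Fin q => (cntMid b w t : ℤ) = (q:ℤ)-1-c).card := G4 hN hb c

lemma G6 (hN : N = 2*w+1) {b : Fin q → ZMod N} (hb : Function.Injective b) (c : ℤ) :
    (∑ j : ZMod N, if (cntLt b w j : ℤ) ≤ c then (1:ℚ) else -1)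
      = (Mmid b w c : ℚ) + (Dlo b w c : ℚ) - (Dlo b w ((q:ℤ)-1-c) : ℚ) := by
  have h2 : (Dlo b w c : ℚ) + (Dlo b w ((q:ℤ)-1-c) : ℚ)
      = (N : ℚ) + (Mmid b w c : ℚ) := by exact_mod_cast G2 hN hb c
  calc (∑ j : ZMod N, if (cntLt b w j : ℤ) ≤ c then (1:ℚ) else -1)
      = ∑ j : ZMod N, ((if (cntLt b w j : ℤ) ≤ c then (2:ℚ) else 0) - 1) := by
        apply Finset.sum_congr rfl; intro j _; split_ifs <;> norm_num
    _ = (∑ j : ZMod N, (if (cntLt b w j : ℤ) ≤ c then (2:ℚ) else 0)) - N := by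
        rw [Finset.sum_sub_distrib, Finset.sum_const]; simp [ZMod.card]
    _ = (Dlo b w c : ℚ) * 2 - N := by
        rw [← Finset.sum_filter, Finset.sum_const, Dlo]
        simp [mul_comm]
    _ = (Mmid b w c : ℚ) + (Dlo b w c : ℚ) - (Dlo b w ((q:ℤ)-1-c) : ℚ) := by
        linarith

end Stmt11Aux

namespace Stmt11Aux

lemma min_diff (p x : ℕ) (hx : x + 1 ≤ 2*p) :
    ((min (x+1) (2*p - (x+1)) : ℕ) : ℚ) - ((min x (2*p - x) : ℕ) : ℚ)
      = if x < p then 1 else -1 := by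
  split_ifs with h
  · rw [min_eq_left (by omega), min_eq_left (by omega)]
    push_cast; ring
  · rw [min_eq_right (by omega), min_eq_right (by omega)]
    rw [Nat.cast_sub hx, Nat.cast_sub (by omega)]
    push_cast; ring

lemma sum_comp_eq {k : ℕ} (u v : Fin k → ℤ)
    (huv : ∀ c : ℤ, (univ.filter fun t => u t = c).card
      = (univ.filter fun t => v t = c).card)
    (F : ℤ → ℚ) : (∑ t, F (u t)) = (∑ t, F (v t)) := by
  classical
  set T : Finset ℤ := (univ.image u) ∪ (univ.image v) with hT
  have h1 : ∑ t, F (u t) = ∑ c ∈ T, ((univ.filter fun t => u t = c).card : ℚ) * F c := by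
    rw [← Finset.sum_fiberwise_of_maps_to (g := u) (t := T)
      (fun t _ => mem_union_left _ (mem_image_of_mem u (mem_univ t))) (fun t => F (u t))]
    apply Finset.sum_congr rfl; intro c _
    rw [Finset.sum_congr rfl (fun t ht => by rw [(Finset.mem_filter.mp ht).2]),
      Finset.sum_const, nsmul_eq_mul]
  have h2 : ∑ t, F (v t) = ∑ c ∈ T, ((univ.filter fun t => v t = c).card : ℚ) * F c := by
    rw [← Finset.sum_fiberwise_of_maps_to (g := v) (t := T)
      (fun t _ => mem_union_right _ (mem_image_of_mem v (mem_univ t))) (fun t => F (v t))]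
    apply Finset.sum_congr rfl; intro c _
    rw [Finset.sum_congr rfl (fun t ht => by rw [(Finset.mem_filter.mp ht).2]),
      Finset.sum_const, nsmul_eq_mul]
  rw [h1, h2]
  exact Finset.sum_congr rfl (fun c _ => by rw [huv c])

end Stmt11Aux

open Finset Stmt11Aux


/-- The union of `c` consecutively indexed `A`-regions starting at `A_i`. -/
def ASeg (m n : ℕ) [NeZero m] [NeZero n] (i : ZMod m) (c : ℕ) :
    Finset (ZMod m ⊕ ZMod n) :=
  (Finset.range c).image (fun d : ℕ => Sum.inl (i + (d : ZMod m)))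

/-- The union of `c` consecutively indexed `B`-regions starting at `B_j`. -/
def BSeg (m n : ℕ) [NeZero m] [NeZero n] (j : ZMod n) (c : ℕ) :
    Finset (ZMod m ⊕ ZMod n) :=
  (Finset.range c).image (fun d : ℕ => Sum.inr (j + (d : ZMod n)))

/-- The value (LHS − RHS) of the `(m,n)` toric inequality on a K(2p)-vector with
`k` distinct `A`-members (given by `a`) and `2p−k` distinct `B`-members (given by
`b`), whose entropies are `S X = min(|X ∩ members|, 2p − |X ∩ members|)`, equals
`#{(t,t') : g t + h t' = p−1} − min(k, 2p−k)`, where `g` and `h` are the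
almost-semicircle counting functions of the members in `ZMod m` resp. `ZMod n`.
In particular this value depends only on `g` and `h`, not on `m` and `n`. -/
theorem stmt_11 (m n p k : ℕ) [NeZero m] [NeZero n] (hm : Odd m) (hn : Odd n)
    (hp : 1 ≤ p) (hk : k ≤ 2*p)
    (a : Fin k → ZMod m) (ha : Function.Injective a)
    (b : Fin (2*p-k) → ZMod n) (hb : Function.Injective b)
    (cnt : Finset (ZMod m ⊕ ZMod n) → ℕ)
    (hcnt : ∀ X, cnt X = (Finset.univ.filter (fun t : Fin k => Sum.inl (a t) ∈ X)).card
        + (Finset.univ.filter (fun t' : Fin (2*p-k) => Sum.inr (b t') ∈ X)).card)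
    (S : Finset (ZMod m ⊕ ZMod n) → ℚ)
    (hS : ∀ X, S X = ((min (cnt X) (2*p - cnt X) : ℕ) : ℚ))
    (g : Fin k → ℕ)
    (hg : ∀ t, g t = (Finset.univ.filter (fun s : Fin k =>
        a s ∈ (Finset.Icc 1 ((m-1)/2)).image (fun d : ℕ => a t + (d : ZMod m)))).card)
    (h : Fin (2*p-k) → ℕ)
    (hh : ∀ t', h t' = (Finset.univ.filter (fun s' : Fin (2*p-k) =>
        b s' ∈ (Finset.Icc 1 ((n-1)/2)).image (fun d : ℕ => b t' + (d : ZMod n)))).card) :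
    (∑ i : ZMod m, ∑ j : ZMod n, S (ASeg m n i ((m+1)/2) ∪ BSeg m n j ((n-1)/2)))
      - ((∑ i : ZMod m, ∑ j : ZMod n, S (ASeg m n i ((m-1)/2) ∪ BSeg m n j ((n-1)/2)))
        + S (Finset.univ.image Sum.inl))
    = ((Finset.univ.filter (fun tt' : Fin k × Fin (2*p-k) =>
          g tt'.1 + h tt'.2 = p - 1)).card : ℚ)
      - ((min k (2*p-k) : ℕ) : ℚ) := by
  classical
  obtain ⟨u, hu⟩ := hm
  obtain ⟨w, hwn⟩ := hn
  rw [show (m-1)/2 = u by omega] at hg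
  rw [show (n-1)/2 = w by omega] at hh
  rw [show (m+1)/2 = u+1 by omega, show (m-1)/2 = u by omega, show (n-1)/2 = w by omega]
  -- bridges for g and h
  have hgc : ∀ t, g t = cntMid a u t := by
    intro t
    rw [hg t, cntMid]
    apply congrArg
    apply Finset.filter_congr
    intro s _
    simp only [mem_Icc_image (show u < m by omega)]
  have hhc : ∀ t', h t' = cntMid b w t' := by
    intro t'
    rw [hh t', cntMid]
    apply congrArg
    apply Finset.filter_congr
    intro s _
    simp only [mem_Icc_image (show w < n by omega)]
  -- membership in unions
  have memA : ∀ (i : ZMod m) (j : ZMod n) (c c' : ℕ), c ≤ m → ∀ x : ZMod m,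
      ((Sum.inl x : ZMod m ⊕ ZMod n) ∈ ASeg m n i c ∪ BSeg m n j c' ↔ (x - i).val < c) := by
    intro i j c c' hc x
    rw [Finset.mem_union, ← mem_range_image hc i x]
    simp [ASeg, BSeg, Finset.mem_image]
  have memB : ∀ (i : ZMod m) (j : ZMod n) (c c' : ℕ), c' ≤ n → ∀ y : ZMod n,
      ((Sum.inr y : ZMod m ⊕ ZMod n) ∈ ASeg m n i c ∪ BSeg m n j c' ↔ (y - j).val < c') := by
    intro i j c c' hc' y
    rw [Finset.mem_union, ← mem_range_image hc' j y]
    simp [ASeg, BSeg, Finset.mem_image]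
  -- counting members of union segments
  have hcntU : ∀ (i : ZMod m) (j : ZMod n) (c c' : ℕ), c ≤ m → c' ≤ n →
      cnt (ASeg m n i c ∪ BSeg m n j c') = cntLt a c i + cntLt b c' j := by
    intro i j c c' hc hc'
    rw [hcnt]
    congr 1
    · apply congrArg
      apply Finset.filter_congr
      intro t _
      simp only [memA i j c c' hc (a t)]
    · apply congrArg
      apply Finset.filter_congr
      intro t' _
      simp only [memB i j c c' hc' (b t')]
  -- splitting off the extra cell
  have hchi : ∀ i : ZMod m, cntLt a (u+1) i
      = cntLt a u i + (if ∃ t, a t = i + (u : ZMod m) then 1 else 0) := by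
    intro i
    rw [cntLt, cntLt, ← card_filter_eq_mem ha,
      Finset.card_filter, Finset.card_filter, Finset.card_filter, ← Finset.sum_add_distrib]
    apply Finset.sum_congr rfl
    intro t _
    have e2' : (a t = i + (u : ZMod m)) ↔ ((a t - i).val = u) := by
      rw [val_eq_iff (show u < m by omega), sub_eq_iff_eq_add']
    simp only [e2']
    split_ifs <;> omega
  -- bounds
  have hFAle : ∀ i : ZMod m, (∃ t, a t = i + (u : ZMod m)) → cntLt a u i + 1 ≤ k := by
    rintro i ⟨t0, ht0⟩
    have hsub : (univ.filter fun t => (a t - i).val < u) ⊆ univ.erase t0 := by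
      intro t ht
      simp only [Finset.mem_filter] at ht
      refine Finset.mem_erase.mpr ⟨?_, Finset.mem_univ t⟩
      rintro rfl
      rw [ht0, add_sub_cancel_left, ZMod.val_cast_of_lt (show u < m by omega)] at ht
      omega
    have h1 : cntLt a u i ≤ (univ.erase t0).card := Finset.card_le_card hsub
    rw [Finset.card_erase_of_mem (Finset.mem_univ t0), Finset.card_univ,
      Fintype.card_fin] at h1
    have hk0 : 0 < k := t0.pos
    omega
  have hFBle : ∀ j : ZMod n, cntLt b w j ≤ 2*p - k := by
    intro j
    calc cntLt b w j ≤ univ.card := Finset.card_filter_le _ _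
      _ = 2*p - k := by rw [Finset.card_univ, Fintype.card_fin]
  -- the purifier term
  have hSinl : S (Finset.univ.image Sum.inl) = ((min k (2*p-k) : ℕ) : ℚ) := by
    rw [hS, hcnt]
    have h1 : (univ.filter fun t : Fin k =>
        Sum.inl (a t) ∈ univ.image (Sum.inl : ZMod m → ZMod m ⊕ ZMod n)).card = k := by
      rw [Finset.filter_true_of_mem, Finset.card_univ, Fintype.card_fin]
      intro t _
      exact Finset.mem_image.mpr ⟨a t, Finset.mem_univ _, rfl⟩
    have h2 : (univ.filter fun t' : Fin (2*p-k) =>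
        Sum.inr (b t') ∈ univ.image (Sum.inl : ZMod m → ZMod m ⊕ ZMod n)).card = 0 := by
      rw [Finset.card_eq_zero, Finset.filter_eq_empty_iff]
      intro t' _ hmem
      obtain ⟨x, -, hx⟩ := Finset.mem_image.mp hmem
      exact absurd hx (by simp)
    rw [h1, h2]
    norm_num
  -- per-pair difference
  have hdiff : ∀ (i : ZMod m) (j : ZMod n),
      S (ASeg m n i (u+1) ∪ BSeg m n j w) - S (ASeg m n i u ∪ BSeg m n j w)
        = if ∃ t, a t = i + (u : ZMod m) then
            (if cntLt a u i + cntLt b w j < p then (1:ℚ) else -1) else 0 := by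
    intro i j
    rw [hS, hS, hcntU i j (u+1) w (by omega) (by omega), hcntU i j u w (by omega) (by omega),
      hchi i]
    by_cases hE : ∃ t, a t = i + (u : ZMod m)
    · rw [if_pos hE, if_pos hE]
      have hx : cntLt a u i + (1:ℕ) + cntLt b w j = (cntLt a u i + cntLt b w j) + 1 := by ring
      rw [hx]
      exact min_diff p _ (by have h3 := hFAle i hE; have h4 := hFBle j; omega)
    · rw [if_neg hE, if_neg hE, add_zero, sub_self]
  -- inner sum computed by G6
  have hGt : ∀ t : Fin k,
      (∑ j : ZMod n, if cntLt a u (a t - (u:ZMod m)) + cntLt b w j < p then (1:ℚ) else -1)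
        = (Mmid b w ((p:ℤ) - k + g t) : ℚ) + (Dlo b w ((p:ℤ) - k + g t) : ℚ)
          - (Dlo b w (((2*p-k:ℕ):ℤ) - 1 - ((p:ℤ) - k + g t)) : ℚ) := by
    intro t
    have hpt := G4pt (show m = 2*u+1 from hu) ha t
    have hstep : ∀ j : ZMod n,
        (cntLt a u (a t - (u:ZMod m)) + cntLt b w j < p)
          ↔ ((cntLt b w j : ℤ) ≤ (p:ℤ) - k + g t) := by
      intro j
      rw [hgc t]
      omega
    rw [Finset.sum_congr rfl (fun j _ => if_congr (hstep j) rfl rfl)]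
    exact G6 (show n = 2*w+1 from hwn) hb _
  -- the double sum difference
  have hdsum : (∑ i : ZMod m, ∑ j : ZMod n, S (ASeg m n i (u+1) ∪ BSeg m n j w))
      - (∑ i : ZMod m, ∑ j : ZMod n, S (ASeg m n i u ∪ BSeg m n j w))
      = ∑ t : Fin k, ((Mmid b w ((p:ℤ) - k + g t) : ℚ)
          + (Dlo b w ((p:ℤ) - k + g t) : ℚ)
          - (Dlo b w (((2*p-k:ℕ):ℤ) - 1 - ((p:ℤ) - k + g t)) : ℚ)) := by
    calc (∑ i : ZMod m, ∑ j : ZMod n, S (ASeg m n i (u+1) ∪ BSeg m n j w))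
          - (∑ i : ZMod m, ∑ j : ZMod n, S (ASeg m n i u ∪ BSeg m n j w))
        = ∑ i : ZMod m, ∑ j : ZMod n,
            (S (ASeg m n i (u+1) ∪ BSeg m n j w) - S (ASeg m n i u ∪ BSeg m n j w)) := by
          rw [← Finset.sum_sub_distrib]
          exact Finset.sum_congr rfl (fun i _ => by rw [← Finset.sum_sub_distrib])
      _ = ∑ i : ZMod m, (if ∃ t, a t = i + (u:ZMod m) then
            (∑ j : ZMod n, if cntLt a u i + cntLt b w j < p then (1:ℚ) else -1) else 0) := by
          apply Finset.sum_congr rfl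
          intro i _
          by_cases hE : ∃ t, a t = i + (u:ZMod m)
          · rw [if_pos hE]
            exact Finset.sum_congr rfl (fun j _ => by rw [hdiff i j, if_pos hE])
          · rw [if_neg hE]
            rw [Finset.sum_congr rfl (fun j _ => by rw [hdiff i j, if_neg hE]),
              Finset.sum_const, smul_zero]
      _ = ∑ i ∈ univ.filter (fun i : ZMod m => ∃ t, a t = i + (u:ZMod m)),
            (∑ j : ZMod n, if cntLt a u i + cntLt b w j < p then (1:ℚ) else -1) :=
          (Finset.sum_filter _ _).symm
      _ = ∑ t : Fin k, (∑ j : ZMod n,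
            if cntLt a u (a t - (u:ZMod m)) + cntLt b w j < p then (1:ℚ) else -1) := by
          symm
          apply Finset.sum_bij (fun (t : Fin k) (_ : t ∈ univ) => a t - (u:ZMod m))
          · intro t _
            simp only [Finset.mem_filter, Finset.mem_univ, true_and]
            exact ⟨t, by ring⟩
          · intro t1 _ t2 _ hteq
            exact ha (by rwa [sub_left_inj] at hteq)
          · intro i hi
            simp only [Finset.mem_filter, Finset.mem_univ, true_and] at hi
            obtain ⟨t, ht⟩ := hi
            exact ⟨t, Finset.mem_univ t, by rw [ht]; ring⟩
          · intro t _
            rfl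
      _ = ∑ t : Fin k, ((Mmid b w ((p:ℤ) - k + g t) : ℚ)
            + (Dlo b w ((p:ℤ) - k + g t) : ℚ)
            - (Dlo b w (((2*p-k:ℕ):ℤ) - 1 - ((p:ℤ) - k + g t)) : ℚ)) :=
          Finset.sum_congr rfl (fun t _ => hGt t)
  -- the Mmid part counts the pairs
  have hMsum : ∑ t : Fin k, (Mmid b w ((p:ℤ) - k + g t) : ℚ)
      = ((univ.filter (fun tt' : Fin k × Fin (2*p-k) =>
          g tt'.1 + h tt'.2 = p - 1)).card : ℚ) := by
    have hM : ∀ t : Fin k, (Mmid b w ((p:ℤ) - k + g t) : ℚ)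
        = ∑ t' : Fin (2*p-k), (if g t + h t' = p - 1 then (1:ℚ) else 0) := by
      intro t
      rw [G4 (show n = 2*w+1 from hwn) hb ((p:ℤ) - k + g t), Finset.card_filter]
      push_cast
      apply Finset.sum_congr rfl
      intro t' _
      have hiff : ((cntMid b w t' : ℤ) = ((2*p-k:ℕ):ℤ) - 1 - ((p:ℤ) - k + g t))
          ↔ (g t + h t' = p - 1) := by
        rw [hhc t']
        omega
      rw [if_congr hiff rfl rfl]
    rw [Finset.sum_congr rfl (fun t _ => hM t), Finset.card_filter]
    push_cast
    rw [show (univ : Finset (Fin k × Fin (2*p-k))) = univ ×ˢ univ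
      from Finset.univ_product_univ.symm, Finset.sum_product]
  -- the Dlo part vanishes
  have hzero : ∑ t : Fin k, ((Dlo b w ((p:ℤ) - k + g t) : ℚ)
      - (Dlo b w (((2*p-k:ℕ):ℤ) - 1 - ((p:ℤ) - k + g t)) : ℚ)) = 0 := by
    rw [Finset.sum_sub_distrib]
    have heq : ∑ t : Fin k, (Dlo b w (((2*p-k:ℕ):ℤ) - 1 - ((p:ℤ) - k + g t)) : ℚ)
        = ∑ t : Fin k, (Dlo b w ((p:ℤ) - k + ((k:ℤ) - 1 - g t)) : ℚ) :=
      Finset.sum_congr rfl (fun t _ => by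
        rw [show ((2*p-k:ℕ):ℤ) - 1 - ((p:ℤ) - k + g t)
          = (p:ℤ) - k + ((k:ℤ) - 1 - g t) by omega])
    rw [heq]
    have huv : ∀ c : ℤ, (univ.filter fun t : Fin k => (g t : ℤ) = c).card
        = (univ.filter fun t : Fin k => (k:ℤ) - 1 - g t = c).card := by
      intro c
      have h5 := G5 (show m = 2*u+1 from hu) ha c
      calc (univ.filter fun t : Fin k => (g t : ℤ) = c).card
          = (univ.filter fun t : Fin k => (cntMid a u t : ℤ) = c).card := by
            apply congrArg
            apply Finset.filter_congr
            intro t _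
            rw [hgc t]
        _ = (univ.filter fun t : Fin k => (cntMid a u t : ℤ) = (k:ℤ) - 1 - c).card := h5
        _ = (univ.filter fun t : Fin k => (k:ℤ) - 1 - g t = c).card := by
            apply congrArg
            apply Finset.filter_congr
            intro t _
            rw [hgc t]
            constructor <;> (intro h6; omega)
    have hcomp := sum_comp_eq (fun t : Fin k => (g t : ℤ))
      (fun t : Fin k => (k:ℤ) - 1 - g t) huv
      (fun v => (Dlo b w ((p:ℤ) - k + v) : ℚ))
    rw [hcomp, sub_self]
  -- assemble
  have hfinal : (∑ i : ZMod m, ∑ j : ZMod n, S (ASeg m n i (u+1) ∪ BSeg m n j w))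
      - (∑ i : ZMod m, ∑ j : ZMod n, S (ASeg m n i u ∪ BSeg m n j w))
      = ((univ.filter (fun tt' : Fin k × Fin (2*p-k) =>
          g tt'.1 + h tt'.2 = p - 1)).card : ℚ) := by
    rw [hdsum]
    calc ∑ t : Fin k, ((Mmid b w ((p:ℤ) - k + g t) : ℚ)
            + (Dlo b w ((p:ℤ) - k + g t) : ℚ)
            - (Dlo b w (((2*p-k:ℕ):ℤ) - 1 - ((p:ℤ) - k + g t)) : ℚ))
        = ∑ t : Fin k, ((Mmid b w ((p:ℤ) - k + g t) : ℚ)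
            + ((Dlo b w ((p:ℤ) - k + g t) : ℚ)
              - (Dlo b w (((2*p-k:ℕ):ℤ) - 1 - ((p:ℤ) - k + g t)) : ℚ))) :=
          Finset.sum_congr rfl (fun t _ => by ring)
      _ = (∑ t : Fin k, (Mmid b w ((p:ℤ) - k + g t) : ℚ))
            + ∑ t : Fin k, ((Dlo b w ((p:ℤ) - k + g t) : ℚ)
              - (Dlo b w (((2*p-k:ℕ):ℤ) - 1 - ((p:ℤ) - k + g t)) : ℚ)) :=
          Finset.sum_add_distrib
      _ = ((univ.filter (fun tt' : Fin k × Fin (2*p-k) =>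
            g tt'.1 + h tt'.2 = p - 1)).card : ℚ) := by
          rw [hMsum, hzero, add_zero]
  rw [hSinl]
  linarith [hfinal]
end

section
/- Every (m,n) toric inequality evaluated on a K4-vector gives either 0 or 2; it gives 2 if and only if the members consist of three regions of one type (A or B) whose counting function g is {1,1,1} and one region of the other type. -/
open Finset

namespace ZMod

variable {N : ℕ} [NeZero N]

theorem val_add_eq_or {u w z : ZMod N} (h : u + w = z) :
    u.val + w.val = z.val ∨ u.val + w.val = z.val + N := by
  subst h
  rcases lt_or_ge (u.val + w.val) N with hlt | hge
  · exact Or.inl (val_add_of_lt hlt).symm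
  · exact Or.inr (val_add_val_of_le hge)

theorem val_sub_add_val_sub_of_ne {x y : ZMod N} (h : x ≠ y) :
    (x - y).val + (y - x).val = N := by
  have hxy : (x - y).val ≠ 0 := by rwa [Ne, val_eq_zero, sub_eq_zero]
  have := val_add_eq_or (show x - y + (y - x) = 0 by ring)
  rw [val_zero] at this
  omega

end ZMod

section Window

variable {N : ℕ}

def window (c : ℕ) (i : ZMod N) : Finset (ZMod N) := (range c).image fun d : ℕ => i + d

def rightNbhd (L : ℕ) (y : ZMod N) : Finset (ZMod N) := (Icc 1 L).image fun d : ℕ => y + d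

theorem window_succ (c : ℕ) (i : ZMod N) : window (c + 1) i = insert (i + c) (window c i) := by
  rw [window, range_add_one, image_insert, ← window]

theorem card_window {c : ℕ} (hc : c ≤ N) (i : ZMod N) : #(window c i) = c := by
  rw [window, card_image_of_injOn, card_range]
  intro d hd e he hde
  simp only [coe_range, Set.mem_Iio] at hd he
  have := congrArg ZMod.val (add_left_cancel hde)
  rwa [ZMod.val_cast_of_lt (hd.trans_le hc), ZMod.val_cast_of_lt (he.trans_le hc)] at this

variable [NeZero N]

theorem mem_window_iff {c : ℕ} (hc : c ≤ N) {i x : ZMod N} :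
    x ∈ window c i ↔ (x - i).val < c := by
  simp only [window, mem_image, mem_range]
  constructor
  · rintro ⟨d, hd, rfl⟩
    rwa [add_sub_cancel_left, ZMod.val_cast_of_lt (hd.trans_le hc)]
  · exact fun h => ⟨_, h, by rw [ZMod.natCast_zmod_val, add_sub_cancel]⟩

theorem mem_rightNbhd_iff {L : ℕ} (hL : L < N) {x y : ZMod N} :
    x ∈ rightNbhd L y ↔ 1 ≤ (x - y).val ∧ (x - y).val ≤ L := by
  simp only [rightNbhd, mem_image, mem_Icc]
  constructor
  · rintro ⟨d, hd, rfl⟩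
    rwa [add_sub_cancel_left, ZMod.val_cast_of_lt (hd.2.trans_lt hL)]
  · exact fun h => ⟨_, h, by rw [ZMod.natCast_zmod_val, add_sub_cancel]⟩

theorem mem_window_add_iff {c : ℕ} (hc : c ≤ N) {i x : ZMod N} :
    x ∈ window (N - c) (i + (c : ZMod N)) ↔ x ∉ window c i := by
  rw [mem_window_iff (Nat.sub_le N c), mem_window_iff hc]
  rcases hc.lt_or_eq with hc | rfl
  · have := ZMod.val_add_eq_or (show x - (i + c) + (c : ZMod N) = x - i by ring)
    rw [ZMod.val_cast_of_lt hc] at this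
    have := (x - i).val_lt
    have := (x - (i + c)).val_lt
    omega
  · simp [ZMod.val_lt]

end Window

section Count

variable {N κ : ℕ}

def windowCount (x : Fin κ → ZMod N) (c : ℕ) (i : ZMod N) : ℕ := #{t | x t ∈ window c i}

def rightCount (x : Fin κ → ZMod N) (L : ℕ) (t : Fin κ) : ℕ := #{s | x s ∈ rightNbhd L (x t)}

theorem windowCount_le (x : Fin κ → ZMod N) (c : ℕ) (i : ZMod N) : windowCount x c i ≤ κ :=
  (card_filter_le _ _).trans (card_univ.trans (Fintype.card_fin κ)).le

variable [NeZero N]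

theorem sum_windowCount {c : ℕ} (hc : c ≤ N) (x : Fin κ → ZMod N) :
    ∑ i, windowCount x c i = κ * c := by
  have hstart : ∀ y : ZMod N, #{i | y ∈ window c i} = c := fun y => by
    have : ({i | y ∈ window c i} : Finset (ZMod N)) = (window c 0).image (y - ·) := by
      ext i
      simp only [mem_filter, mem_univ, true_and, mem_image, mem_window_iff hc, sub_zero]
      exact ⟨fun h => ⟨y - i, h, sub_sub_cancel y i⟩,
        by rintro ⟨z, hz, rfl⟩; rwa [sub_sub_cancel]⟩
    rw [this, card_image_of_injective _ (sub_right_injective), card_window hc]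
  simp only [windowCount, card_filter]
  rw [sum_comm]
  simp only [← card_filter, hstart, sum_const, card_univ, Fintype.card_fin, smul_eq_mul]

theorem windowCount_add_windowCount {c : ℕ} (hc : c ≤ N) (x : Fin κ → ZMod N)
    (i : ZMod N) :
    windowCount x c i + windowCount x (N - c) (i + c) = κ := by
  simp only [windowCount, mem_window_add_iff hc]
  rw [card_filter_add_card_filter_not, card_univ, Fintype.card_fin]

theorem windowCount_succ {c : ℕ} (hc : c < N) (x : Fin κ → ZMod N) (i : ZMod N) :
    windowCount x (c + 1) i = windowCount x c i + #{t | x t = i + c} := by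
  have hnot : i + c ∉ window c i := by
    rw [mem_window_iff hc.le, add_sub_cancel_left, ZMod.val_cast_of_lt hc]
    exact lt_irrefl c
  simp only [windowCount, window_succ, mem_insert]
  rw [filter_or, card_union_of_disjoint, add_comm]
  exact disjoint_filter.mpr fun t _ ht hmem => hnot (ht ▸ hmem)

/-- Only the windows ending just before a member change when they grow by one. -/
theorem sum_sub_windowCount_succ {G : Type*} [AddCommGroup G] {L : ℕ} (hL : L < N)
    {x : Fin κ → ZMod N} (hx : Function.Injective x) (φ : ℕ → G) :
    ∑ i, (φ (windowCount x (L + 1) i) - φ (windowCount x L i))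
      = ∑ t, (φ (windowCount x L (x t - L) + 1) - φ (windowCount x L (x t - L))) := by
  have hstart : Function.Injective fun t => x t - L := fun s t h => hx (sub_left_injective h)
  have hzero : ∀ i ∉ univ.image fun t => x t - L,
      φ (windowCount x (L + 1) i) - φ (windowCount x L i) = 0 := by
    intro i hi
    have : #{t | x t = i + L} = 0 := by
      refine card_eq_zero.mpr (filter_eq_empty_iff.mpr fun t _ ht => hi ?_)
      exact mem_image.mpr ⟨t, mem_univ t, by rw [ht, add_sub_cancel_right]⟩
    rw [windowCount_succ hL, this, add_zero, sub_self]
  rw [← sum_subset (subset_univ _) fun i _ => hzero i, sum_image fun s _ t _ h => hstart h]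
  refine sum_congr rfl fun t _ => ?_
  have : #{s | x s = x t - L + L} = 1 := by
    rw [card_eq_one]
    exact ⟨t, by ext s; simp [hx.eq_iff]⟩
  rw [windowCount_succ hL, this]

theorem mem_window_sub_iff {L : ℕ} (hL : L < N) {x y : ZMod N} :
    y ∈ window L (x - (L : ZMod N)) ↔ x ∈ rightNbhd L y := by
  rw [mem_window_iff hL.le, mem_rightNbhd_iff hL]
  have := ZMod.val_add_eq_or (show y - (x - L) + (x - y) = (L : ZMod N) by ring)
  rw [ZMod.val_cast_of_lt hL] at this
  have := (y - (x - L)).val_lt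
  have := (x - y).val_lt
  omega

theorem windowCount_sub_eq {L : ℕ} (hL : L < N) (x : Fin κ → ZMod N) (t : Fin κ) :
    windowCount x L (x t - L) = #{s | x t ∈ rightNbhd L (x s)} := by
  simp only [windowCount, mem_window_sub_iff hL]

theorem sum_windowCount_sub {L : ℕ} (hL : L < N) (x : Fin κ → ZMod N) :
    ∑ t, windowCount x L (x t - L) = ∑ t, rightCount x L t := by
  simp only [windowCount_sub_eq hL, rightCount, card_filter]
  exact sum_comm

/-- Of two distinct points of a cycle of length `2L+1`, exactly one lies in the right
neighbourhood of the other. -/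
theorem windowCount_sub_add_rightCount {L : ℕ} (hN : N = 2 * L + 1) {x : Fin κ → ZMod N}
    (hx : Function.Injective x) (t : Fin κ) :
    windowCount x L (x t - L) + rightCount x L t + 1 = κ := by
  have hL : L < N := by omega
  have hpair : ∀ s, ((if x t ∈ rightNbhd L (x s) then 1 else 0)
      + (if x s ∈ rightNbhd L (x t) then 1 else 0) : ℕ) = if s ≠ t then 1 else 0 := by
    intro s
    simp only [mem_rightNbhd_iff hL]
    by_cases hst : s = t
    · simp [hst]
    · have := ZMod.val_sub_add_val_sub_of_ne (hx.ne hst)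
      have := (x s - x t).val_lt
      have := (x t - x s).val_lt
      split_ifs <;> omega
  rw [windowCount_sub_eq hL, rightCount, card_filter, card_filter, ← sum_add_distrib,
    sum_congr rfl fun s _ => hpair s, ← card_filter, filter_ne',
    card_erase_of_mem (mem_univ t), card_univ, Fintype.card_fin]
  have := t.pos
  omega

end Count

section Toric

/-- The entropy of a region containing `c` of the four legs of the star. -/
def starEntropy (c : ℕ) : ℚ := (min c (4 - c) : ℕ)

theorem starEntropy_eq_of_add_eq_four {c d : ℕ} (h : c + d = 4) :
    starEntropy c = starEntropy d := by
  rw [starEntropy, starEntropy, show min c (4 - c) = min d (4 - d) by omega]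

theorem starEntropy_steps_of_two {c₀ c₁ β : ℕ} (hc : c₀ + c₁ = 1) (hβ : β ≤ 2) :
    starEntropy (c₀ + 1 + β) - starEntropy (c₀ + β)
      + (starEntropy (c₁ + 1 + β) - starEntropy (c₁ + β)) = 2 - 2 * β := by
  obtain ⟨rfl, rfl⟩ | ⟨rfl, rfl⟩ : c₀ = 0 ∧ c₁ = 1 ∨ c₀ = 1 ∧ c₁ = 0 := by
    omega
  all_goals interval_cases β <;> norm_num [starEntropy]

theorem starEntropy_steps_of_three {c₀ c₁ c₂ β : ℕ} (hc : c₀ + c₁ + c₂ = 3) (h₀ : c₀ ≤ 2)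
    (h₁ : c₁ ≤ 2) (h₂ : c₂ ≤ 2) (hβ : β ≤ 1) :
    starEntropy (c₀ + 1 + β) - starEntropy (c₀ + β)
      + (starEntropy (c₁ + 1 + β) - starEntropy (c₁ + β))
      + (starEntropy (c₂ + 1 + β) - starEntropy (c₂ + β))
      = (if c₀ = 1 ∧ c₁ = 1 ∧ c₂ = 1 then 3 else 1) * (1 - 2 * β) := by
  interval_cases c₀ <;> interval_cases c₁ <;> interval_cases c₂ <;> interval_cases β <;>
    first | omega | norm_num [starEntropy]

variable {M N κ l : ℕ} [NeZero M] [NeZero N]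

/-- The value of the `(2L+1, 2L'+1)` toric inequality on the star with `A`-members `x` and
`B`-members `y`. -/
def toricValue (x : Fin κ → ZMod M) (y : Fin l → ZMod N) (L L' : ℕ) : ℚ :=
  ∑ i, ∑ j, (starEntropy (windowCount x (L + 1) i + windowCount y L' j)
    - starEntropy (windowCount x L i + windowCount y L' j)) - starEntropy κ

theorem sum_sub_mul_windowCount {L' : ℕ} (hN : N = 2 * L' + 1) (y : Fin l → ZMod N)
    (p q : ℚ) :
    ∑ j, (p - q * windowCount y L' j) = (2 * L' + 1) * p - q * (l * L') := by
  rw [sum_sub_distrib, ← mul_sum, ← Nat.cast_sum, sum_windowCount (by omega), sum_const,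
    card_univ, ZMod.card, hN, nsmul_eq_mul]
  push_cast
  ring

/-- Reflecting every region to its complement on the torus turns `A`-windows of length `L+1`
into windows of length `L` and `B`-windows of length `L'` into windows of length `L'+1`. -/
theorem sum_starEntropy_succ_eq {L L' : ℕ} (hM : M = 2 * L + 1) (hN : N = 2 * L' + 1)
    (h : κ + l = 4) (x : Fin κ → ZMod M) (y : Fin l → ZMod N) :
    ∑ i, ∑ j, starEntropy (windowCount x (L + 1) i + windowCount y L' j)
      = ∑ i, ∑ j, starEntropy (windowCount x L i + windowCount y (L' + 1) j) := by
  have hx i : windowCount x (L + 1) i + windowCount x L (i + (L + 1 : ℕ)) = κ := by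
    have := windowCount_add_windowCount (show L + 1 ≤ M by omega) x i
    rwa [show M - (L + 1) = L by omega] at this
  have hy j : windowCount y (L' + 1) j + windowCount y L' (j + (L' + 1 : ℕ)) = l := by
    have := windowCount_add_windowCount (show L' + 1 ≤ N by omega) y j
    rwa [show N - (L' + 1) = L' by omega] at this
  calc ∑ i, ∑ j, starEntropy (windowCount x (L + 1) i + windowCount y L' j)
      = ∑ i, ∑ j,
          starEntropy (windowCount x (L + 1) i + windowCount y L' (j + (L' + 1 : ℕ))) :=
        sum_congr rfl fun i _ => (Equiv.sum_comp (Equiv.addRight ((L' + 1 : ℕ) : ZMod N))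
          fun j => starEntropy (windowCount x (L + 1) i + windowCount y L' j)).symm
    _ = ∑ i, ∑ j,
          starEntropy (windowCount x L (i + (L + 1 : ℕ)) + windowCount y (L' + 1) j) :=
        sum_congr rfl fun i _ => sum_congr rfl fun j _ =>
          starEntropy_eq_of_add_eq_four (by have := hx i; have := hy j; omega)
    _ = ∑ i, ∑ j, starEntropy (windowCount x L i + windowCount y (L' + 1) j) :=
        Equiv.sum_comp (Equiv.addRight ((L + 1 : ℕ) : ZMod M))
          fun i => ∑ j, starEntropy (windowCount x L i + windowCount y (L' + 1) j)

theorem toricValue_comm {L L' : ℕ} (hM : M = 2 * L + 1) (hN : N = 2 * L' + 1) (h : κ + l = 4)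
    (x : Fin κ → ZMod M) (y : Fin l → ZMod N) : toricValue x y L L' = toricValue y x L' L := by
  simp only [toricValue, sum_sub_distrib]
  rw [sum_starEntropy_succ_eq hM hN h, sum_comm, starEntropy_eq_of_add_eq_four h]
  simp only [add_comm (windowCount x _ _)]
  rw [sum_comm (f := fun i j => starEntropy (windowCount y L' j + windowCount x L i))]

theorem toricValue_eq_sum_members {L L' : ℕ} (hM : M = 2 * L + 1) {x : Fin κ → ZMod M}
    (hx : Function.Injective x) (y : Fin l → ZMod N) :
    toricValue x y L L' = ∑ t, ∑ j,
      (starEntropy (windowCount x L (x t - L) + 1 + windowCount y L' j)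
        - starEntropy (windowCount x L (x t - L) + windowCount y L' j)) - starEntropy κ := by
  rw [toricValue, sum_comm, sum_comm (γ := Fin κ)]
  congr 1
  refine sum_congr rfl fun j _ => ?_
  exact sum_sub_windowCount_succ (by omega) hx (fun c => starEntropy (c + windowCount y L' j))

theorem toricValue_of_card_zero {L L' : ℕ} (x : Fin 0 → ZMod M) (y : Fin l → ZMod N) :
    toricValue x y L L' = 0 := by
  simp [toricValue, windowCount, starEntropy]

theorem toricValue_of_card_two {L L' : ℕ} (hM : M = 2 * L + 1) (hN : N = 2 * L' + 1)
    {x : Fin 2 → ZMod M} (hx : Function.Injective x) (y : Fin 2 → ZMod N) :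
    toricValue x y L L' = 0 := by
  have h₀ := windowCount_sub_add_rightCount hM hx 0
  have h₁ := windowCount_sub_add_rightCount hM hx 1
  have hsum := sum_windowCount_sub (show L < M by omega) x
  rw [Fin.sum_univ_two, Fin.sum_univ_two] at hsum
  rw [toricValue_eq_sum_members hM hx, Fin.sum_univ_two, ← sum_add_distrib,
    sum_congr rfl fun j _ => starEntropy_steps_of_two (by omega) (windowCount_le y L' j),
    sum_sub_mul_windowCount hN]
  norm_num [starEntropy]
  ring

theorem toricValue_of_card_three {L L' : ℕ} (hM : M = 2 * L + 1) (hN : N = 2 * L' + 1)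
    {x : Fin 3 → ZMod M} (hx : Function.Injective x) (y : Fin 1 → ZMod N) :
    toricValue x y L L' = if ∀ t, rightCount x L t = 1 then 2 else 0 := by
  have h₀ := windowCount_sub_add_rightCount hM hx 0
  have h₁ := windowCount_sub_add_rightCount hM hx 1
  have h₂ := windowCount_sub_add_rightCount hM hx 2
  have hsum := sum_windowCount_sub (show L < M by omega) x
  rw [Fin.sum_univ_three, Fin.sum_univ_three] at hsum
  rw [toricValue_eq_sum_members hM hx, Fin.sum_univ_three, ← sum_add_distrib,
    ← sum_add_distrib, sum_congr rfl fun j _ => starEntropy_steps_of_three (by omega) (by omega)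
      (by omega) (by omega) (windowCount_le y L' j)]
  have hall : (∀ t, rightCount x L t = 1) ↔ windowCount x L (x 0 - L) = 1 ∧
      windowCount x L (x 1 - L) = 1 ∧ windowCount x L (x 2 - L) = 1 := by
    simp only [Fin.forall_iff_succ, Fin.succ_zero_eq_one, Fin.succ_one_eq_two,
      IsEmpty.forall_iff, and_true]
    omega
  simp only [mul_sub, mul_one, ← mul_assoc, hall]
  rw [sum_sub_mul_windowCount hN]
  split_ifs
  · norm_num [starEntropy]
    ring
  · norm_num [starEntropy]

theorem toricValue_eq {L L' : ℕ} (hM : M = 2 * L + 1) (hN : N = 2 * L' + 1) (h : κ + l = 4)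
    {x : Fin κ → ZMod M} (hx : Function.Injective x) {y : Fin l → ZMod N}
    (hy : Function.Injective y) :
    toricValue x y L L' = if (κ = 3 ∧ ∀ t, rightCount x L t = 1) ∨
      (l = 3 ∧ ∀ t, rightCount y L' t = 1) then 2 else 0 := by
  obtain rfl | rfl | rfl | rfl | rfl : κ = 0 ∨ κ = 1 ∨ κ = 2 ∨ κ = 3 ∨ κ = 4 := by omega
  · obtain rfl : l = 4 := by omega
    simp [toricValue_of_card_zero]
  · obtain rfl : l = 3 := by omega
    simp [toricValue_comm hM hN h, toricValue_of_card_three hN hM hy]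
  · obtain rfl : l = 2 := by omega
    simp [toricValue_of_card_two hM hN hx]
  · obtain rfl : l = 1 := by omega
    simp [toricValue_of_card_three hM hN hx]
  · obtain rfl : l = 0 := by omega
    simp [toricValue_comm hM hN h, toricValue_of_card_zero]

end Toric

section Torus

variable {m n : ℕ} [NeZero m] [NeZero n] {i : ZMod m} {j : ZMod n} {c c' : ℕ}

theorem inl_mem_ASeg_union_BSeg {x : ZMod m} :
    Sum.inl x ∈ ASeg m n i c ∪ BSeg m n j c' ↔ x ∈ window c i := by
  simp [ASeg, BSeg, window, eq_comm]

theorem inr_mem_ASeg_union_BSeg {y : ZMod n} :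
    Sum.inr y ∈ ASeg m n i c ∪ BSeg m n j c' ↔ y ∈ window c' j := by
  simp [ASeg, BSeg, window, eq_comm]

end Torus

theorem stmt_12_general (m n k : ℕ) [NeZero m] [NeZero n] (hm : Odd m) (hn : Odd n)
    (hk : k ≤ 4)
    (a : Fin k → ZMod m) (ha : Function.Injective a)
    (b : Fin (4-k) → ZMod n) (hb : Function.Injective b)
    (cnt : Finset (ZMod m ⊕ ZMod n) → ℕ)
    (hcnt : ∀ X, cnt X = (Finset.univ.filter (fun t : Fin k => Sum.inl (a t) ∈ X)).card
        + (Finset.univ.filter (fun t' : Fin (4-k) => Sum.inr (b t') ∈ X)).card)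
    (S : Finset (ZMod m ⊕ ZMod n) → ℚ)
    (hS : ∀ X, S X = ((min (cnt X) (4 - cnt X) : ℕ) : ℚ))
    (g : Fin k → ℕ)
    (hg : ∀ t, g t = (Finset.univ.filter (fun s : Fin k =>
        a s ∈ (Finset.Icc 1 ((m-1)/2)).image (fun d : ℕ => a t + (d : ZMod m)))).card)
    (h : Fin (4-k) → ℕ)
    (hh : ∀ t', h t' = (Finset.univ.filter (fun s' : Fin (4-k) =>
        b s' ∈ (Finset.Icc 1 ((n-1)/2)).image (fun d : ℕ => b t' + (d : ZMod n)))).card)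
    (V : ℚ)
    (hV : V = (∑ i : ZMod m, ∑ j : ZMod n, S (ASeg m n i ((m+1)/2) ∪ BSeg m n j ((n-1)/2)))
      - ((∑ i : ZMod m, ∑ j : ZMod n, S (ASeg m n i ((m-1)/2) ∪ BSeg m n j ((n-1)/2)))
        + S (Finset.univ.image Sum.inl))) :
    (V = 0 ∨ V = 2) ∧
    (V = 2 ↔ ((k = 3 ∧ ∀ t, g t = 1) ∨ (k = 1 ∧ ∀ t', h t' = 1))) := by
  obtain ⟨L, rfl⟩ := hm
  obtain ⟨L', rfl⟩ := hn
  simp only [show (2 * L + 1 - 1) / 2 = L by omega, show (2 * L + 1 + 1) / 2 = L + 1 by omega,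
    show (2 * L' + 1 - 1) / 2 = L' by omega] at hg hh hV
  have hS_union i j c c' : S (ASeg _ _ i c ∪ BSeg _ _ j c')
      = starEntropy (windowCount a c i + windowCount b c' j) := by
    simp only [hS, hcnt, inl_mem_ASeg_union_BSeg, inr_mem_ASeg_union_BSeg]
    rfl
  have hS_A : S (univ.image Sum.inl) = starEntropy k := by
    simp [hS, hcnt, starEntropy]
  have hV' : V = toricValue a b L L' := by
    simp only [hV, hS_union, hS_A, toricValue, sum_sub_distrib]
    ring
  have hk1 : 4 - k = 3 ↔ k = 1 := by omega
  rw [hV', toricValue_eq rfl rfl (by omega) ha hb, show g = rightCount a L from funext hg,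
    show h = rightCount b L' from funext hh]
  simp only [hk1]
  split_ifs with hP
  · exact ⟨Or.inr rfl, iff_of_true rfl hP⟩
  · exact ⟨Or.inl rfl, iff_of_false (by norm_num) hP⟩

/-- Every `(m,n)` toric inequality (`m`, `n` odd, `(m,n) ≠ (1,1)`) evaluated on a
K4-vector (with `k` distinct `A`-members and `4−k` distinct `B`-members, entropies
`S X = min(|X ∩ members|, 4 − |X ∩ members|)`) gives either `0` or `2`; it gives `2`
if and only if the members are three regions of one type with counting function
`{1,1,1}` together with one region of the other type. -/
theorem stmt_12 (m n k : ℕ) [NeZero m] [NeZero n] (hm : Odd m) (hn : Odd n)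
    (hmn : ¬(m = 1 ∧ n = 1)) (hk : k ≤ 4)
    (a : Fin k → ZMod m) (ha : Function.Injective a)
    (b : Fin (4-k) → ZMod n) (hb : Function.Injective b)
    (cnt : Finset (ZMod m ⊕ ZMod n) → ℕ)
    (hcnt : ∀ X, cnt X = (Finset.univ.filter (fun t : Fin k => Sum.inl (a t) ∈ X)).card
        + (Finset.univ.filter (fun t' : Fin (4-k) => Sum.inr (b t') ∈ X)).card)
    (S : Finset (ZMod m ⊕ ZMod n) → ℚ)
    (hS : ∀ X, S X = ((min (cnt X) (4 - cnt X) : ℕ) : ℚ))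
    (g : Fin k → ℕ)
    (hg : ∀ t, g t = (Finset.univ.filter (fun s : Fin k =>
        a s ∈ (Finset.Icc 1 ((m-1)/2)).image (fun d : ℕ => a t + (d : ZMod m)))).card)
    (h : Fin (4-k) → ℕ)
    (hh : ∀ t', h t' = (Finset.univ.filter (fun s' : Fin (4-k) =>
        b s' ∈ (Finset.Icc 1 ((n-1)/2)).image (fun d : ℕ => b t' + (d : ZMod n)))).card)
    (V : ℚ)
    (hV : V = (∑ i : ZMod m, ∑ j : ZMod n, S (ASeg m n i ((m+1)/2) ∪ BSeg m n j ((n-1)/2)))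
      - ((∑ i : ZMod m, ∑ j : ZMod n, S (ASeg m n i ((m-1)/2) ∪ BSeg m n j ((n-1)/2)))
        + S (Finset.univ.image Sum.inl))) :
    (V = 0 ∨ V = 2) ∧
    (V = 2 ↔ ((k = 3 ∧ ∀ t, g t = 1) ∨ (k = 1 ∧ ∀ t', h t' = 1))) :=
  stmt_12_general m n k hm hn hk a ha b hb cnt hcnt S hS g hg h hh V hV
end

section
/- Consider quadruples (i_1, i_2; j_1, j_2) with 1 ≤ i_1 < i_2 ≤ m, i_1+1 ≤ j_1 ≤ i_2, and (i_2+1 ≤ j_2 ≤ m or 1 ≤ j_2 ≤ i_1). The graph on such quadruples in which two quadruples are adjacent when they differ in exactly one of the four coordinates (with the staggering property preserved) is connected; in particular every such quadruple is connected to (1, m; m, 1) by single-coordinate hops. -/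
/-- A quadruple `(i₁, i₂; j₁, j₂)` (encoded as `q : Fin 4 → ℕ`) indexing a
non-saturating K4-vector of the `m`-th projective plane inequality:
`1 ≤ i₁ < i₂ ≤ m`, `i₁+1 ≤ j₁ ≤ i₂`, and (`i₂+1 ≤ j₂ ≤ m` or `1 ≤ j₂ ≤ i₁`). -/
def Staggered (m : ℕ) (q : Fin 4 → ℕ) : Prop :=
  1 ≤ q 0 ∧ q 0 < q 1 ∧ q 1 ≤ m ∧
  q 0 + 1 ≤ q 2 ∧ q 2 ≤ q 1 ∧
  ((q 1 + 1 ≤ q 3 ∧ q 3 ≤ m) ∨ (1 ≤ q 3 ∧ q 3 ≤ q 0))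

private lemma step_reach (m : ℕ) (u v : {q : Fin 4 → ℕ // Staggered m q}) (k : Fin 4)
    (h : ∀ i, i ≠ k → u.1 i = v.1 i) :
    (SimpleGraph.fromRel (fun u v : {q : Fin 4 → ℕ // Staggered m q} =>
        (Finset.univ.filter (fun i : Fin 4 => u.1 i ≠ v.1 i)).card = 1)).Reachable u v := by
  by_cases hk : u.1 k = v.1 k
  · have huv : u = v := Subtype.ext (funext fun i => by
      by_cases hi : i = k
      · subst hi; exact hk
      · exact h i hi)
    rw [huv]
  · apply SimpleGraph.Adj.reachable
    refine ⟨fun he => hk (congrArg (fun w => w.1 k) he), Or.inl ?_⟩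
    show (Finset.univ.filter (fun i : Fin 4 => u.1 i ≠ v.1 i)).card = 1
    rw [Finset.card_eq_one]
    refine ⟨k, Finset.eq_singleton_iff_unique_mem.mpr
      ⟨Finset.mem_filter.mpr ⟨Finset.mem_univ _, hk⟩, fun i hi => ?_⟩⟩
    by_contra hik
    exact (Finset.mem_filter.mp hi).2 (h i hik)

/-- The graph on staggered quadruples, two quadruples being adjacent when they
differ in exactly one of the four coordinates, is connected; in particular every
staggered quadruple is connected to `(1, m; m, 1)` by single-coordinate hops. -/
theorem stmt_15 (m : ℕ) (hm : 2 ≤ m) :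
    (SimpleGraph.fromRel (fun u v : {q : Fin 4 → ℕ // Staggered m q} =>
        (Finset.univ.filter (fun i : Fin 4 => u.1 i ≠ v.1 i)).card = 1)).Connected := by
  have hb : Staggered m ![1, m, m, 1] := by
    simp [Staggered]; omega
  set base : {q : Fin 4 → ℕ // Staggered m q} := ⟨![1, m, m, 1], hb⟩ with hbase
  have key : ∀ u : {q : Fin 4 → ℕ // Staggered m q},
      (SimpleGraph.fromRel (fun u v : {q : Fin 4 → ℕ // Staggered m q} =>
        (Finset.univ.filter (fun i : Fin 4 => u.1 i ≠ v.1 i)).card = 1)).Reachable base u := by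
    rintro ⟨q, hq⟩
    obtain ⟨h1, h2, h3, h4, h5, h6⟩ := hq
    have hp1 : Staggered m ![q 0, m, m, 1] := by
      simp [Staggered]; omega
    have hp2 : Staggered m ![q 0, m, q 2, 1] := by
      simp [Staggered]; omega
    have hp3 : Staggered m ![q 0, q 1, q 2, 1] := by
      simp [Staggered]; omega
    refine (step_reach m base ⟨_, hp1⟩ 0 ?_).trans
      ((step_reach m ⟨_, hp1⟩ ⟨_, hp2⟩ 2 ?_).trans
      ((step_reach m ⟨_, hp2⟩ ⟨_, hp3⟩ 1 ?_).trans
      (step_reach m ⟨_, hp3⟩ ⟨q, ⟨h1, h2, h3, h4, h5, h6⟩⟩ 3 ?_))) <;>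
    · intro i hi
      fin_cases i <;> simp_all
  have : Nonempty {q : Fin 4 → ℕ // Staggered m q} := ⟨base⟩
  exact ⟨fun u v => (key u).symm.trans (key v)⟩
end

section
/- Let g: Z/k → Z≥0 satisfy Σ g(t) = k(k−1)/2, g(t+1) ≥ g(t) − 1, 0 ≤ g(t) ≤ k−2 (i.e., g never achieves k−1), and suppose g achieves the value k−2 somewhere and the value 1 somewhere. If k ≥ 5, then there exists t* ∈ Z/k with g(t*−1) ≠ 1 and g(t*+1) ≠ k−2. -/
/-- Discrete intermediate value theorem for sequences decreasing by at most 1. -/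
lemma stmt_18_ivt : ∀ (n : ℕ) (f : ℕ → ℕ), (∀ i, f i ≤ f (i+1) + 1) →
    ∀ v, f n ≤ v → v ≤ f 0 → ∃ i ≤ n, f i = v := by
  intro n
  induction n with
  | zero => exact fun f _ v h1 h2 => ⟨0, le_rfl, le_antisymm h1 h2⟩
  | succ n ih =>
    intro f hf v h1 h2
    by_cases hv : f 0 ≤ v
    · exact ⟨0, Nat.zero_le _, le_antisymm hv h2⟩
    · have h0 : f 0 ≤ f 1 + 1 := by simpa using hf 0
      obtain ⟨i, hi, hfi⟩ := ih (fun i => f (i+1)) (fun i => hf (i+1)) v h1 (show v ≤ f 1 by omega)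
      exact ⟨i+1, Nat.succ_le_succ hi, hfi⟩

/-- Let `g : ZMod k → ℕ` satisfy `Σ g = k(k−1)/2`, `g(t+1) ≥ g(t) − 1`,
`g(t) ≤ k−2` for all `t` (so `g` never achieves `k−1`), and suppose `g` achieves
the value `k−2` somewhere and the value `1` somewhere.  If `k ≥ 5`, then there is
`t*` with `g(t*−1) ≠ 1` and `g(t*+1) ≠ k−2`. -/
theorem stmt_18 (k : ℕ) [NeZero k] (hk : 5 ≤ k) (g : ZMod k → ℕ)
    (hsum : ∑ t : ZMod k, g t = k * (k-1) / 2)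
    (hstep : ∀ t, g t ≤ g (t+1) + 1)
    (hub : ∀ t, g t ≤ k - 2)
    (h1 : ∃ t, g t = 1) (h2 : ∃ t, g t = k - 2) :
    ∃ tstar : ZMod k, g (tstar - 1) ≠ 1 ∧ g (tstar + 1) ≠ k - 2 := by
  classical
  obtain ⟨t1, ht1⟩ := h1
  obtain ⟨t2, ht2⟩ := h2
  -- every value in [1, k-2] is attained
  have hall : ∀ v : ℕ, 1 ≤ v → v ≤ k - 2 → ∃ t, g t = v := by
    intro v hv1 hv2
    set f : ℕ → ℕ := fun i => g (t2 + (i : ZMod k)) with hf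
    have hfstep : ∀ i, f i ≤ f (i+1) + 1 := by
      intro i
      have := hstep (t2 + (i : ZMod k))
      simpa [hf, add_assoc] using this
    set n := (t1 - t2).val with hn
    have hfn : f n = 1 := by
      have : ((n : ZMod k)) = t1 - t2 := by simp [hn, ZMod.natCast_val, ZMod.cast_id]
      simp [hf, this, ht1]
    have hf0 : f 0 = k - 2 := by simp [hf, ht2]
    obtain ⟨i, _, hfi⟩ := stmt_18_ivt n f hfstep v (by omega) (by omega)
    exact ⟨t2 + (i : ZMod k), hfi⟩
  -- choose witnesses
  have hall' : ∀ v : ℕ, ∃ t : ZMod k, (1 ≤ v → v ≤ k - 2 → g t = v) := by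
    intro v
    by_cases h : 1 ≤ v ∧ v ≤ k - 2
    · obtain ⟨t, ht⟩ := hall v h.1 h.2; exact ⟨t, fun _ _ => ht⟩
    · exact ⟨0, fun h1 h2 => absurd ⟨h1, h2⟩ h⟩
  choose τ hτ using hall'
  have hτval : ∀ v ∈ Finset.Icc 1 (k-2), g (τ v) = v := by
    intro v hv
    rw [Finset.mem_Icc] at hv
    exact hτ v hv.1 hv.2
  set T : Finset (ZMod k) := (Finset.Icc 1 (k-2)).image τ with hT
  have hinj : Set.InjOn τ (Finset.Icc 1 (k-2)) := by
    intro a ha b hb hab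
    have := hτval a ha
    have := hτval b hb
    rw [hab] at *
    omega
  have hcardT : T.card = k - 2 := by
    rw [hT, Finset.card_image_of_injOn hinj, Nat.card_Icc]
    omega
  set T' : Finset (ZMod k) := Finset.univ \ T with hT'
  have hcardT' : T'.card = 2 := by
    rw [hT', Finset.card_sdiff_of_subset (Finset.subset_univ T), Finset.card_univ, ZMod.card, hcardT]
    omega
  set C1 : Finset (ZMod k) := Finset.univ.filter (fun t => g t = 1) with hC1
  set C2 : Finset (ZMod k) := Finset.univ.filter (fun t => g t = k - 2) with hC2
  have hsub : C1 ∪ C2 ⊆ insert (τ 1) (insert (τ (k-2)) T') := by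
    intro t ht
    by_cases hmem : t ∈ T
    · rw [hT, Finset.mem_image] at hmem
      obtain ⟨v, hv, hvt⟩ := hmem
      have hgv : g t = v := by rw [← hvt]; exact hτval v hv
      rcases Finset.mem_union.mp ht with h | h
      · have : g t = 1 := (Finset.mem_filter.mp h).2
        have : v = 1 := by omega
        subst this
        exact Finset.mem_insert.mpr (Or.inl hvt.symm)
      · have : g t = k - 2 := (Finset.mem_filter.mp h).2
        have : v = k - 2 := by omega
        subst this
        exact Finset.mem_insert.mpr (Or.inr (Finset.mem_insert.mpr (Or.inl hvt.symm)))
    · exact Finset.mem_insert.mpr (Or.inr (Finset.mem_insert.mpr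
        (Or.inr (Finset.mem_sdiff.mpr ⟨Finset.mem_univ t, hmem⟩))))
  have hdisj : Disjoint C1 C2 := by
    rw [Finset.disjoint_left]
    intro t h1' h2'
    have := (Finset.mem_filter.mp h1').2
    have := (Finset.mem_filter.mp h2').2
    omega
  have hcard12 : C1.card + C2.card ≤ 4 := by
    have h1 : (C1 ∪ C2).card = C1.card + C2.card := Finset.card_union_of_disjoint hdisj
    have h2 : (C1 ∪ C2).card ≤ (insert (τ 1) (insert (τ (k-2)) T')).card :=
      Finset.card_le_card hsub
    have h3 : (insert (τ 1) (insert (τ (k-2)) T')).card ≤ 4 := by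
      calc (insert (τ 1) (insert (τ (k-2)) T')).card
          ≤ (insert (τ (k-2)) T').card + 1 := Finset.card_insert_le _ _
        _ ≤ T'.card + 1 + 1 := by have := Finset.card_insert_le (τ (k-2)) T'; omega
        _ ≤ 4 := by omega
    omega
  set B : Finset (ZMod k) := C1.image (· + 1) ∪ C2.image (· - 1) with hB
  have hcardB : B.card < k := by
    have h1 : (C1.image (· + 1)).card ≤ C1.card := Finset.card_image_le
    have h2 : (C2.image (· - 1)).card ≤ C2.card := Finset.card_image_le
    have h3 : B.card ≤ (C1.image (· + 1)).card + (C2.image (· - 1)).card :=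
      Finset.card_union_le _ _
    omega
  have hex : ∃ t : ZMod k, t ∉ B := by
    by_contra h
    push_neg at h
    have : Finset.univ ⊆ B := fun t _ => h t
    have := Finset.card_le_card this
    rw [Finset.card_univ, ZMod.card] at this
    omega
  obtain ⟨tstar, htstar⟩ := hex
  refine ⟨tstar, ?_, ?_⟩
  · intro hcon
    apply htstar
    rw [hB]
    apply Finset.mem_union_left
    apply Finset.mem_image.mpr
    exact ⟨tstar - 1, Finset.mem_filter.mpr ⟨Finset.mem_univ _, hcon⟩, by ring⟩
  · intro hcon
    apply htstar
    rw [hB]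
    apply Finset.mem_union_right
    apply Finset.mem_image.mpr
    exact ⟨tstar + 1, Finset.mem_filter.mpr ⟨Finset.mem_univ _, hcon⟩, by ring⟩
end
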